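/- arXiv:1405.3427 — 3 statements merged into one kernel-verified Lean document; each statement's English description precedes it below -/
import Mathlib

section
/- Let R be an SMLL net and M_R its SIAM machine. There is no infinite sequence of transitions of M_R starting from the initial state I_R. -/
/-! # SMLL: multiplicative linear logic with synchronization

Formalization of the proof-structures, correctness criterion, reduction and
multi-token machine (SIAM) of Dal Lago, Faggian, Hasuo, Yoshimizu,
"The Geometry of Synchronization". -/

/-- SMLL formulas (in negation normal form):
`A ::= 1 | ⊥ | X | X⊥ | A ⊗ A | A ⅋ A`. -/
inductive Formula : Type
  | one : Formula
  | bot : Formula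
  | var : ℕ → Formula
  | covar : ℕ → Formula
  | tens : Formula → Formula → Formula
  | parr : Formula → Formula → Formula
  deriving DecidableEq

namespace Formula

/-- Linear negation. -/
def dual : Formula → Formula
  | one => bot
  | bot => one
  | var n => covar n
  | covar n => var n
  | tens A B => parr A.dual B.dual
  | parr A B => tens A.dual B.dual

/-- Positive formulas: `P ::= 1 | P ⊗ P`. -/
inductive Positive : Formula → Prop
  | one : Positive one
  | tens {A B : Formula} : Positive A → Positive B → Positive (tens A B)

/-- Negative formulas: `N ::= ⊥ | N ⅋ N`. -/
inductive Negative : Formula → Prop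
  | bot : Negative bot
  | parr {A B : Formula} : Negative A → Negative B → Negative (parr A B)

/-- A formula is polarized when it is positive or negative. -/
def Polarized (A : Formula) : Prop := Positive A ∨ Negative A

/-- Whether `⊥` occurs in a formula. -/
def hasBotB : Formula → Bool
  | one => false
  | bot => true
  | var _ => false
  | covar _ => false
  | tens A B => hasBotB A || hasBotB B
  | parr A B => hasBotB A || hasBotB B

/-- Addresses of occurrences inside a formula: `false` = left, `true` = right. -/
abbrev Addr := List Bool

/-- Subformula at a given address (if the address is meaningful). -/
def sub : Formula → Addr → Option Formula
  | A, [] => some A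
  | tens A _, false :: m => sub A m
  | tens _ B, true :: m => sub B m
  | parr A _, false :: m => sub A m
  | parr _ B, true :: m => sub B m
  | _, _ :: _ => none

def IsAtom : Formula → Prop
  | one => True
  | bot => True
  | var _ => True
  | covar _ => True
  | tens _ _ => False
  | parr _ _ => False

/-- `m` is the address of an occurrence of an atom in `A`. -/
def AtomOcc (A : Formula) (m : Addr) : Prop := ∃ a, sub A m = some a ∧ IsAtom a

/-- The atom occurrence at `m` in `A` is positive (it is `1` or `X`). -/
def PosOcc (A : Formula) (m : Addr) : Prop :=
  ∃ a, sub A m = some a ∧ (a = one ∨ ∃ n, a = var n)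

/-- The atom occurrence at `m` in `A` is negative (it is `⊥` or `X⊥`). -/
def NegOcc (A : Formula) (m : Addr) : Prop :=
  ∃ a, sub A m = some a ∧ (a = bot ∨ ∃ n, a = covar n)

theorem NegOcc.atomOcc {A : Formula} {m : Addr} (h : NegOcc A m) : AtomOcc A m := by
  obtain ⟨a, ha, h⟩ := h
  refine ⟨a, ha, ?_⟩
  rcases h with rfl | ⟨n, rfl⟩ <;> trivial

theorem PosOcc.atomOcc {A : Formula} {m : Addr} (h : PosOcc A m) : AtomOcc A m := by
  obtain ⟨a, ha, h⟩ := h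
  refine ⟨a, ha, ?_⟩
  rcases h with rfl | ⟨n, rfl⟩ <;> trivial

end Formula

/-- The sorts of links of an SMLL structure. -/
inductive LinkSort : Type
  | ax | cut | tens | parr | one | bot | sync
  deriving DecidableEq

/-- An SMLL proof-structure (with boxes): a finite directed multigraph whose
edges are typed by formulas and whose nodes are links.  Every edge is the
conclusion of exactly one link (its `src`); it is the premiss of the link
`tgt`, if any (edges with no target are the conclusions of the structure).
`pIdx` indexes an edge among the premisses of its target (for `⊗`/`⅋`-links:
`0` = left, `1` = right; for sync links it pairs premisses with conclusions);
`cIdx` indexes an edge among the conclusions of its source (for sync links,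
the `i`-th conclusion corresponds to the `i`-th premiss).  Each `bot`-link is
the lock of a box; `box n` is the innermost box containing the node `n` and
`boxes n` is the set of all boxes containing `n`. -/
structure Struct : Type 1 where
  Edge : Type
  Node : Type
  edgeFintype : Fintype Edge
  nodeFintype : Fintype Node
  edgeDecEq : DecidableEq Edge
  nodeDecEq : DecidableEq Node
  typ : Edge → Formula
  sort : Node → LinkSort
  src : Edge → Node
  tgt : Edge → Option Node
  pIdx : Edge → ℕ
  cIdx : Edge → ℕ
  box : Node → Option Node
  boxes : Node → Finset Node

attribute [instance] Struct.edgeFintype Struct.nodeFintype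
attribute [instance] Struct.edgeDecEq Struct.nodeDecEq

namespace Struct

variable (S : Struct)

/-- The conclusions of a link. -/
def concls (n : S.Node) : Finset S.Edge := Finset.univ.filter fun e => S.src e = n

/-- The premisses of a link. -/
def prems (n : S.Node) : Finset S.Edge := Finset.univ.filter fun e => S.tgt e = some n

/-- The conclusions of the structure. -/
def IsConcl (e : S.Edge) : Prop := S.tgt e = none

/-- Well-formedness of an SMLL structure: the constraints that the sort of a
link induces on the number and the types of its premisses and conclusions,
together with the coherence of the nesting of boxes. -/
def WF : Prop :=
  (∀ n, S.sort n = .ax → S.prems n = ∅ ∧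
    ∃ e f, e ≠ f ∧ S.concls n = {e, f} ∧ S.typ f = (S.typ e).dual) ∧
  (∀ n, S.sort n = .cut → S.concls n = ∅ ∧
    ∃ e f, e ≠ f ∧ S.prems n = {e, f} ∧ S.typ f = (S.typ e).dual) ∧
  (∀ n, S.sort n = .tens → ∃ e f g, e ≠ f ∧ S.prems n = {e, f} ∧
    S.pIdx e = 0 ∧ S.pIdx f = 1 ∧ S.concls n = {g} ∧
    S.typ g = .tens (S.typ e) (S.typ f)) ∧
  (∀ n, S.sort n = .parr → ∃ e f g, e ≠ f ∧ S.prems n = {e, f} ∧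
    S.pIdx e = 0 ∧ S.pIdx f = 1 ∧ S.concls n = {g} ∧
    S.typ g = .parr (S.typ e) (S.typ f)) ∧
  (∀ n, S.sort n = .one → S.prems n = ∅ ∧ ∃ e, S.concls n = {e} ∧ S.typ e = .one) ∧
  (∀ n, S.sort n = .bot → S.prems n = ∅ ∧ ∃ e, S.concls n = {e} ∧ S.typ e = .bot) ∧
  (∀ n, S.sort n = .sync →
    (∀ e ∈ S.prems n, (S.typ e).Polarized) ∧
    (∀ e ∈ S.prems n, ∃! f, f ∈ S.concls n ∧ S.cIdx f = S.pIdx e) ∧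
    (∀ f ∈ S.concls n, ∃! e, e ∈ S.prems n ∧ S.pIdx e = S.cIdx f) ∧
    (∀ e ∈ S.prems n, ∀ f ∈ S.concls n, S.cIdx f = S.pIdx e → S.typ f = S.typ e)) ∧
  (∀ n b, b ∈ S.boxes n → S.sort b = .bot) ∧
  (∀ n, S.box n = none → S.boxes n = ∅) ∧
  (∀ n b, S.box n = some b → b ∉ S.boxes b ∧ S.boxes n = insert b (S.boxes b)) ∧
  (∀ e n, S.tgt e = some n → S.boxes n ⊆ S.boxes (S.src e))

/-- `b` is the representative of the node `m` in the level-`ℓ` graph (the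
graph in which each box strictly below level `ℓ` is collapsed to a single
box-node, identified with its `bot`-link).  For `ℓ = none` this is the
`0`-graph. -/
def RepAt (ℓ : Option S.Node) (m b : S.Node) : Prop :=
  (S.box m = ℓ ∧ b = m) ∨ (b ∈ S.boxes m ∧ S.box b = ℓ)

/-- Edge `e` joins the nodes `u` and `v` (undirectedly) in the level-`ℓ` graph. -/
def ConnectsAt (ℓ : Option S.Node) (e : S.Edge) (u v : S.Node) : Prop :=
  ∃ t, S.tgt e = some t ∧ (S.box t = ℓ ∨ S.box (S.src e) = ℓ) ∧
    ((S.RepAt ℓ (S.src e) u ∧ S.RepAt ℓ t v) ∨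
     (S.RepAt ℓ (S.src e) v ∧ S.RepAt ℓ t u))

/-- The out-edges of a sync link are its positive conclusions and its negative
premisses. -/
def OutEdgeOf (l : S.Node) (e : S.Edge) : Prop :=
  S.sort l = .sync ∧
  ((S.src e = l ∧ (S.typ e).Positive) ∨ (S.tgt e = some l ∧ (S.typ e).Negative))

/-- There is a switching cycle in the level-`ℓ` graph: a cyclic undirected
simple path which uses at most one of the two premisses of each `⅋`-link and
at most one out-edge of each sync link. -/
def SwitchingCycleAt (ℓ : Option S.Node) : Prop :=
  ∃ (k : ℕ) (v : Fin (k + 1) → S.Node) (e : Fin (k + 1) → S.Edge),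
    Function.Injective v ∧ Function.Injective e ∧
    (∀ i, S.ConnectsAt ℓ (e i) (v i) (v (i + 1))) ∧
    (∀ p, S.sort p = .parr → Set.Subsingleton {i | S.tgt (e i) = some p}) ∧
    (∀ l, S.sort l = .sync → Set.Subsingleton {i | S.OutEdgeOf l (e i)})

/-- Correctness criterion: no switching cycle in the `0`-graph, and,
recursively, no switching cycle in the graph of the content of any box. -/
def Correct : Prop := ∀ ℓ : Option S.Node, ¬ S.SwitchingCycleAt ℓ

/-- A net is a well-formed correct structure. -/
def IsNet : Prop := S.WF ∧ S.Correct

/-! ## Sync paths and hereditary conclusions -/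

/-- One step of a sync path: entering a sync link on a premiss and coming out
on the corresponding conclusion. -/
def SyncStepE (e f : S.Edge) : Prop :=
  ∃ l, S.sort l = .sync ∧ S.tgt e = some l ∧ S.src f = l ∧ S.cIdx f = S.pIdx e

/-- `e` is a hereditary conclusion of the link `l`: there is a sync path from
a conclusion of `l` to `e`. -/
def HereditaryConcl (l : S.Node) (e : S.Edge) : Prop :=
  ∃ f, S.src f = l ∧ Relation.ReflTransGen S.SyncStepE f e

/-- The edge emerges from a box: its source is a `bot`-link (the edge is the
lock of a box) or lies inside some box. -/
def FromBox (e : S.Edge) : Prop := S.sort (S.src e) = .bot ∨ S.box (S.src e) ≠ none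

/-- `e` is a hereditary conclusion of a box. -/
def HereditaryBoxConcl (e : S.Edge) : Prop :=
  ∃ f, S.FromBox f ∧ Relation.ReflTransGen S.SyncStepE f e

/-- A ready cut: a cut at depth 0 neither of whose premisses is a hereditary
conclusion of a box. -/
def ReadyCut (c : S.Node) : Prop :=
  S.sort c = .cut ∧ S.box c = none ∧ ∀ e ∈ S.prems c, ¬ S.HereditaryBoxConcl e

/-! ## Polarized paths and the order on links -/

/-- A node is polarized when all of its conclusions are polarized. -/
def PolarizedNode (n : S.Node) : Prop := ∀ e ∈ S.concls n, (S.typ e).Polarized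

/-- A single step of a polarized path from link `a` to link `b` along the
polarized edge `e`: downwards on positive edges, upwards on negative edges,
connecting polarized nodes and never entering boxes. -/
def PolStep (e : S.Edge) (a b : S.Node) : Prop :=
  S.box a = none ∧ S.box b = none ∧ S.PolarizedNode a ∧ S.PolarizedNode b ∧
  (((S.typ e).Positive ∧ S.src e = a ∧ S.tgt e = some b) ∨
   ((S.typ e).Negative ∧ S.tgt e = some a ∧ S.src e = b))

/-- `a ≺ b` : there is a (simple) polarized path from `a` to `b`. -/
def prec (a b : S.Node) : Prop :=
  ∃ (k : ℕ) (v : Fin (k + 2) → S.Node) (e : Fin (k + 1) → S.Edge),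
    v 0 = a ∧ v (Fin.last _) = b ∧
    Function.Injective v ∧ Function.Injective e ∧
    ∀ i : Fin (k + 1), S.PolStep (e i) (v i.castSucc) (v i.succ)

/-- SMLL⁰ structures: no unit links (hence no boxes). -/
def UnitFree : Prop := ∀ n : S.Node, S.sort n ≠ .one ∧ S.sort n ≠ .bot

/-- Closed structures: no `⊥` occurs in the conclusions. -/
def Closed : Prop := ∀ e : S.Edge, S.tgt e = none → (S.typ e).hasBotB = false

end Struct

/-! ## Reduction -/

/-- A partial injection `j` whose (some-)range is exactly `X`. -/
def PInjOnto {α β : Type*} (j : α → Option β) (X : Set β) : Prop :=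
  (∀ a a' b, j a = some b → j a' = some b → a = a') ∧
  (∀ a b, j a = some b → b ∈ X) ∧
  (∀ b ∈ X, ∃ a, j a = some b)

/-- `j` is total. -/
def JTotal {α β : Type*} (j : α → Option β) : Prop := ∀ a, j a ≠ none

/-- The structures `Q` and `R` agree, along the correspondences `jN`, `jE`,
on all edges outside `XE` and all nodes outside `XN`. -/
def AgreesOn (Q R : Struct) (jN : Q.Node → Option R.Node)
    (jE : Q.Edge → Option R.Edge) (XE : Set R.Edge) (XN : Set R.Node) : Prop :=
  (∀ x y, jE x = some y → y ∉ XE →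
    Q.typ x = R.typ y ∧ jN (Q.src x) = some (R.src y) ∧
    (Q.tgt x).bind jN = R.tgt y ∧ Q.pIdx x = R.pIdx y ∧ Q.cIdx x = R.cIdx y) ∧
  (∀ n m, jN n = some m → m ∉ XN →
    Q.sort n = R.sort m ∧ (Q.box n).bind jN = R.box m ∧
    (∀ b b', jN b = some b' → (b ∈ Q.boxes n ↔ b' ∈ R.boxes m)))

/-- The `ax/cut` step: a cut between a conclusion `v` of an axiom `a` and the
dual premiss is removed together with the axiom; the remaining conclusion `u`
of the axiom and the remaining premiss `q` of the cut are merged. -/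
def AxCutStep (R Q : Struct) : Prop :=
  ∃ (a c : R.Node) (v u q : R.Edge),
    R.sort a = .ax ∧ R.sort c = .cut ∧ R.box a = none ∧ R.box c = none ∧
    v ≠ u ∧ v ≠ q ∧ u ≠ q ∧
    R.concls a = {v, u} ∧ R.prems c = {v, q} ∧
    ∃ (jN : Q.Node → Option R.Node) (jE : Q.Edge → Option R.Edge),
      JTotal jN ∧ JTotal jE ∧
      PInjOnto jN {n | n ≠ a ∧ n ≠ c} ∧
      PInjOnto jE {x | x ≠ v ∧ x ≠ u} ∧
      AgreesOn Q R jN jE {q} ∅ ∧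
      (∀ x, jE x = some q →
        Q.typ x = R.typ q ∧ jN (Q.src x) = some (R.src q) ∧
        (Q.tgt x).bind jN = R.tgt u ∧ Q.pIdx x = R.pIdx u ∧ Q.cIdx x = R.cIdx q)

/-- The `⊗/⅋` step: a cut between `A ⊗ B` and `A⊥ ⅋ B⊥` is replaced by two
cuts between the respective premisses. -/
def TensParrStep (R Q : Struct) : Prop :=
  ∃ (c t p : R.Node) (s s' a1 a2 b1 b2 : R.Edge),
    R.sort c = .cut ∧ R.sort t = .tens ∧ R.sort p = .parr ∧
    R.box c = none ∧ R.box t = none ∧ R.box p = none ∧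
    s ≠ s' ∧ R.prems c = {s, s'} ∧ R.concls t = {s} ∧ R.concls p = {s'} ∧
    a1 ≠ a2 ∧ R.prems t = {a1, a2} ∧ R.pIdx a1 = 0 ∧ R.pIdx a2 = 1 ∧
    b1 ≠ b2 ∧ R.prems p = {b1, b2} ∧ R.pIdx b1 = 0 ∧ R.pIdx b2 = 1 ∧
    ∃ (jN : Q.Node → Option R.Node) (jE : Q.Edge → Option R.Edge) (c' : Q.Node),
      JTotal jE ∧
      PInjOnto jN {n | n ≠ t ∧ n ≠ p} ∧
      PInjOnto jE {x | x ≠ s ∧ x ≠ s'} ∧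
      jN c' = none ∧ (∀ n, jN n = none → n = c') ∧
      Q.sort c' = .cut ∧ Q.box c' = none ∧ Q.boxes c' = ∅ ∧
      AgreesOn Q R jN jE {a1, a2, b1, b2} ∅ ∧
      (∀ x y, jE x = some y → y = a1 ∨ y = b1 →
        Q.typ x = R.typ y ∧ jN (Q.src x) = some (R.src y) ∧
        (Q.tgt x).bind jN = some c ∧ Q.cIdx x = R.cIdx y) ∧
      (∀ x y, jE x = some y → y = a2 ∨ y = b2 →
        Q.typ x = R.typ y ∧ jN (Q.src x) = some (R.src y) ∧
        Q.tgt x = some c' ∧ Q.cIdx x = R.cIdx y)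

/-- Commutation of a sync link with a `⊗` or `⅋` link: the sync link acting
on the conclusion `z` of the multiplicative link `m` (with corresponding sync
conclusion `w`) is pushed above `m`, now acting on the two premisses `x`, `y`
of `m` via two fresh sync positions (indices `i₁`, `i₂`) with fresh edges
`x'`, `y'`. -/
def SyncMultStep (R Q : Struct) : Prop :=
  ∃ (l m : R.Node) (z w x y : R.Edge) (i₁ i₂ : ℕ),
    R.sort l = .sync ∧ (R.sort m = .tens ∨ R.sort m = .parr) ∧
    R.box l = none ∧ R.box m = none ∧
    R.src z = m ∧ R.tgt z = some l ∧ R.src w = l ∧ R.cIdx w = R.pIdx z ∧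
    x ≠ y ∧ R.prems m = {x, y} ∧ R.pIdx x = 0 ∧ R.pIdx y = 1 ∧
    i₁ ≠ i₂ ∧
    (∀ e, R.tgt e = some l → R.pIdx e ≠ i₁ ∧ R.pIdx e ≠ i₂) ∧
    (∀ e, R.src e = l → R.cIdx e ≠ i₁ ∧ R.cIdx e ≠ i₂) ∧
    ∃ (jN : Q.Node → Option R.Node) (jE : Q.Edge → Option R.Edge)
      (l' m' : Q.Node) (x' y' : Q.Edge),
      JTotal jN ∧ PInjOnto jN Set.univ ∧
      PInjOnto jE {e | e ≠ z} ∧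
      jN l' = some l ∧ jN m' = some m ∧
      x' ≠ y' ∧ jE x' = none ∧ jE y' = none ∧ (∀ e, jE e = none → e = x' ∨ e = y') ∧
      AgreesOn Q R jN jE {x, y, w} ∅ ∧
      (∀ e, jE e = some x →
        Q.typ e = R.typ x ∧ jN (Q.src e) = some (R.src x) ∧
        Q.tgt e = some l' ∧ Q.pIdx e = i₁ ∧ Q.cIdx e = R.cIdx x) ∧
      (∀ e, jE e = some y →
        Q.typ e = R.typ y ∧ jN (Q.src e) = some (R.src y) ∧
        Q.tgt e = some l' ∧ Q.pIdx e = i₂ ∧ Q.cIdx e = R.cIdx y) ∧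
      (∀ e, jE e = some w →
        Q.typ e = R.typ w ∧ Q.src e = m' ∧
        (Q.tgt e).bind jN = R.tgt w ∧ Q.pIdx e = R.pIdx w ∧ Q.cIdx e = R.cIdx w) ∧
      (Q.typ x' = R.typ x ∧ Q.src x' = l' ∧ Q.tgt x' = some m' ∧
        Q.pIdx x' = 0 ∧ Q.cIdx x' = i₁) ∧
      (Q.typ y' = R.typ y ∧ Q.src y' = l' ∧ Q.tgt y' = some m' ∧
        Q.pIdx y' = 1 ∧ Q.cIdx y' = i₂)

/-- Commutation of a sync link with an axiom: a sync link acting on a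
positive conclusion `u` of an axiom (with corresponding conclusion `u'`) is
moved to the axiom's other conclusion `v` (of type `P⊥`), with a fresh sync
position of index `j` and fresh edge `v'`. -/
def SyncAxStep (R Q : Struct) : Prop :=
  ∃ (l a : R.Node) (u u' v : R.Edge) (j : ℕ),
    R.sort l = .sync ∧ R.sort a = .ax ∧ R.box l = none ∧ R.box a = none ∧
    (R.typ u).Positive ∧ u ≠ v ∧ R.concls a = {u, v} ∧
    R.tgt u = some l ∧ R.src u' = l ∧ R.cIdx u' = R.pIdx u ∧ u' ≠ u ∧ u' ≠ v ∧
    (∀ e, R.tgt e = some l → R.pIdx e ≠ j) ∧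
    (∀ e, R.src e = l → R.cIdx e ≠ j) ∧
    ∃ (jN : Q.Node → Option R.Node) (jE : Q.Edge → Option R.Edge)
      (l' a' : Q.Node) (v' : Q.Edge),
      JTotal jN ∧ PInjOnto jN Set.univ ∧ PInjOnto jE {e | e ≠ u} ∧
      jN l' = some l ∧ jN a' = some a ∧
      jE v' = none ∧ (∀ e, jE e = none → e = v') ∧
      AgreesOn Q R jN jE {u', v} ∅ ∧
      (∀ e, jE e = some u' →
        Q.typ e = R.typ u' ∧ Q.src e = a' ∧ Q.cIdx e = R.cIdx u ∧
        (Q.tgt e).bind jN = R.tgt u' ∧ Q.pIdx e = R.pIdx u') ∧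
      (∀ e, jE e = some v →
        Q.typ e = R.typ v ∧ Q.src e = a' ∧ Q.cIdx e = R.cIdx v ∧
        Q.tgt e = some l' ∧ Q.pIdx e = j) ∧
      (Q.typ v' = R.typ v ∧ Q.src v' = l' ∧ Q.cIdx v' = j ∧
        (Q.tgt v').bind jN = R.tgt v ∧ Q.pIdx v' = R.pIdx v)

/-- Commutation of a sync link with a cut: a sync link acting on the premiss
`d'` (of negative type `P⊥`) of a cut is moved to the other premiss `q`. -/
def SyncCutStep (R Q : Struct) : Prop :=
  ∃ (l c : R.Node) (d d' q : R.Edge) (j : ℕ),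
    R.sort l = .sync ∧ R.sort c = .cut ∧ R.box l = none ∧ R.box c = none ∧
    (R.typ d').Negative ∧
    R.src d' = l ∧ R.tgt d' = some c ∧ R.tgt d = some l ∧ R.pIdx d = R.cIdx d' ∧
    d' ≠ q ∧ d ≠ q ∧ d ≠ d' ∧ R.prems c = {d', q} ∧
    (∀ e, R.tgt e = some l → R.pIdx e ≠ j) ∧
    (∀ e, R.src e = l → R.cIdx e ≠ j) ∧
    ∃ (jN : Q.Node → Option R.Node) (jE : Q.Edge → Option R.Edge)
      (l' c' : Q.Node) (q' : Q.Edge),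
      JTotal jN ∧ PInjOnto jN Set.univ ∧ PInjOnto jE {e | e ≠ d'} ∧
      jN l' = some l ∧ jN c' = some c ∧
      jE q' = none ∧ (∀ e, jE e = none → e = q') ∧
      AgreesOn Q R jN jE {d, q} ∅ ∧
      (∀ e, jE e = some d →
        Q.typ e = R.typ d ∧ jN (Q.src e) = some (R.src d) ∧ Q.cIdx e = R.cIdx d ∧
        Q.tgt e = some c' ∧ Q.pIdx e = R.pIdx d') ∧
      (∀ e, jE e = some q →
        Q.typ e = R.typ q ∧ jN (Q.src e) = some (R.src q) ∧ Q.cIdx e = R.cIdx q ∧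
        Q.tgt e = some l' ∧ Q.pIdx e = j) ∧
      (Q.typ q' = R.typ q ∧ Q.src q' = l' ∧ Q.cIdx q' = j ∧
        Q.tgt q' = some c' ∧ Q.pIdx q' = R.pIdx q)

/-- Sync elimination: a sync link all of whose premisses are conclusions of
`one`-links is erased, merging each premiss with its corresponding
conclusion. -/
def SyncElimStep (R Q : Struct) : Prop :=
  ∃ l : R.Node, R.sort l = .sync ∧ R.box l = none ∧
    (∀ e ∈ R.prems l, R.sort (R.src e) = .one) ∧
    ∃ (jN : Q.Node → Option R.Node) (jE : Q.Edge → Option R.Edge),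
      JTotal jN ∧ JTotal jE ∧
      PInjOnto jN {n | n ≠ l} ∧
      PInjOnto jE {e | R.src e ≠ l} ∧
      AgreesOn Q R jN jE {e | R.tgt e = some l} ∅ ∧
      (∀ x e f, jE x = some e → R.tgt e = some l → R.src f = l →
        R.cIdx f = R.pIdx e →
        Q.typ x = R.typ e ∧ jN (Q.src x) = some (R.src e) ∧
        (Q.tgt x).bind jN = R.tgt f ∧ Q.pIdx x = R.pIdx f ∧ Q.cIdx x = R.cIdx e)

/-- The `one/⊥` step (box opening): a cut between the conclusion `o` of a
`one`-link `n₁` and the lock `k` of a box `b` removes the cut, the `one`-link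
and the `bot`-link, and opens the box. -/
def OneBotStep (R Q : Struct) : Prop :=
  ∃ (c n₁ b : R.Node) (o k : R.Edge),
    R.sort c = .cut ∧ R.sort n₁ = .one ∧ R.sort b = .bot ∧
    R.box c = none ∧ R.box n₁ = none ∧ R.box b = none ∧
    o ≠ k ∧ R.prems c = {o, k} ∧ R.src o = n₁ ∧ R.src k = b ∧
    ∃ (jN : Q.Node → Option R.Node) (jE : Q.Edge → Option R.Edge),
      JTotal jN ∧ JTotal jE ∧
      PInjOnto jN {n | n ≠ c ∧ n ≠ n₁ ∧ n ≠ b} ∧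
      PInjOnto jE {e | e ≠ o ∧ e ≠ k} ∧
      (∀ x e, jE x = some e →
        Q.typ x = R.typ e ∧ jN (Q.src x) = some (R.src e) ∧
        (Q.tgt x).bind jN = R.tgt e ∧ Q.pIdx x = R.pIdx e ∧ Q.cIdx x = R.cIdx e) ∧
      (∀ n m, jN n = some m →
        Q.sort n = R.sort m ∧
        (∀ b₀ b₀', jN b₀ = some b₀' → (b₀ ∈ Q.boxes n ↔ b₀' ∈ R.boxes m ∧ b₀' ≠ b)) ∧
        (R.box m = some b → Q.box n = none) ∧
        (R.box m ≠ some b → (Q.box n).bind jN = R.box m))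

/-- The sync-commutation and sync-elimination steps. -/
def SyncRed (R Q : Struct) : Prop :=
  SyncMultStep R Q ∨ SyncAxStep R Q ∨ SyncCutStep R Q ∨ SyncElimStep R Q

/-- The reduction relation `→` on SMLL structures (applied at depth 0 only). -/
def Step (R Q : Struct) : Prop :=
  AxCutStep R Q ∨ TensParrStep R Q ∨ SyncRed R Q ∨ OneBotStep R Q

/-- Isomorphism of structures. -/
def Isom (R Q : Struct) : Prop :=
  ∃ (en : R.Node ≃ Q.Node) (ee : R.Edge ≃ Q.Edge),
    (∀ e, Q.typ (ee e) = R.typ e) ∧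
    (∀ e, Q.src (ee e) = en (R.src e)) ∧
    (∀ e, Q.tgt (ee e) = (R.tgt e).map en) ∧
    (∀ e, Q.pIdx (ee e) = R.pIdx e) ∧
    (∀ e, Q.cIdx (ee e) = R.cIdx e) ∧
    (∀ n, Q.sort (en n) = R.sort n) ∧
    (∀ n, Q.box (en n) = (R.box n).map en) ∧
    (∀ n, Q.boxes (en n) = (R.boxes n).image en)

/-! ## The SIAM: a synchronous interaction abstract machine -/

namespace Struct

variable (S : Struct)

/-- The value of a token: either an occurrence of an atom on an edge, or a
position `(e, i)` on the lock `e` of a box (`BOTBOX`). -/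
inductive PosVal (S : Struct) : Type
  | atom : S.Edge → Formula.Addr → PosVal S
  | lock : S.Edge → ℕ → PosVal S

/-- Initial positions: negative atom occurrences in the conclusions. -/
def InitPos (p : S.Edge × Formula.Addr) : Prop :=
  S.tgt p.1 = none ∧ Formula.NegOcc (S.typ p.1) p.2

/-- Final positions: positive atom occurrences in the conclusions. -/
def FinPos (p : S.Edge × Formula.Addr) : Prop :=
  S.tgt p.1 = none ∧ Formula.PosOcc (S.typ p.1) p.2

/-- One positions: conclusions of `one`-links. -/
def OnePos (p : S.Edge × Formula.Addr) : Prop :=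
  S.sort (S.src p.1) = .one ∧ p.2 = []

/-- Valid token values: genuine atom occurrences, or positions on the lock of
a box. -/
def ValidVal : PosVal S → Prop
  | .atom e m => Formula.AtomOcc (S.typ e) m
  | .lock e _ => S.sort (S.src e) = .bot

end Struct

/-- A state of the SIAM machine `M_S`: a (partial) function from
`INIT(S) ∪ L` (with `L ⊆ ONES(S)`) to the positions of `S`; it records, for
each token, its origin and its current position. -/
structure SState (S : Struct) where
  f : S.Edge × Formula.Addr → Option (Struct.PosVal S)
  dom_subset : ∀ p, f p ≠ none → S.InitPos p ∨ S.OnePos p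
  init_total : ∀ p, S.InitPos p → f p ≠ none
  val_valid : ∀ p v, f p = some v → S.ValidVal v

namespace Struct

variable (S : Struct)

/-- The box `b` is unlocked in state `T`: some token sits on its lock. -/
def Unlocked (T : SState S) (b : S.Node) : Prop :=
  ∃ p e i, T.f p = some (.lock e i) ∧ S.src e = b

/-- A link is active: all the boxes containing it are unlocked. -/
def Active (T : SState S) (n : S.Node) : Prop :=
  ∀ b ∈ S.boxes n, S.Unlocked T b

end Struct

open Classical in
/-- The initial state `I_S`: the identity on the initial positions. -/
noncomputable def initState (S : Struct) : SState S where
  f := fun p => if S.InitPos p then some (.atom p.1 p.2) else none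
  dom_subset := by
    intro p hp
    by_cases h : S.InitPos p
    · exact Or.inl h
    · simp [h] at hp
  init_total := by intro p hp; simp [hp]
  val_valid := by
    intro p v hv
    by_cases h : S.InitPos p
    · simp only [if_pos h, Option.some.injEq] at hv
      subst hv
      exact h.2.atomOcc
    · simp [h] at hv

/-- The transition relation of the SIAM.  Tokens on negative atom occurrences
move upwards, tokens on positive atom occurrences move downwards; all tokens
cross a sync link simultaneously, when each of its in-edges is saturated;
active `one`-links may spawn a token; a token reaching the lock of a box
unlocks it.  Tokens may only cross active links (so they can enter a box only
when it is unlocked). -/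
inductive STrans (S : Struct) : SState S → SState S → Prop
  | axUp {T T' : SState S} {p : S.Edge × Formula.Addr} {e e' : S.Edge}
      {m : Formula.Addr} {a : S.Node} :
      T.f p = some (.atom e m) →
      Formula.NegOcc (S.typ e) m →
      S.src e = a → S.sort a = .ax → S.Active T a →
      S.src e' = a → e' ≠ e →
      (∀ q, q ≠ p → T'.f q = T.f q) →
      T'.f p = some (.atom e' m) →
      STrans S T T'
  | cutDown {T T' : SState S} {p : S.Edge × Formula.Addr} {e e' : S.Edge}
      {m : Formula.Addr} {c : S.Node} :
      T.f p = some (.atom e m) →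
      Formula.PosOcc (S.typ e) m →
      S.tgt e = some c → S.sort c = .cut → S.Active T c →
      S.tgt e' = some c → e' ≠ e →
      (∀ q, q ≠ p → T'.f q = T.f q) →
      T'.f p = some (.atom e' m) →
      STrans S T T'
  | multDown {T T' : SState S} {p : S.Edge × Formula.Addr} {e g : S.Edge}
      {m : Formula.Addr} {n : S.Node} {b : Bool} :
      T.f p = some (.atom e m) →
      Formula.PosOcc (S.typ e) m →
      S.tgt e = some n → (S.sort n = .tens ∨ S.sort n = .parr) → S.Active T n →
      S.src g = n →
      S.pIdx e = (if b then 1 else 0) →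
      (∀ q, q ≠ p → T'.f q = T.f q) →
      T'.f p = some (.atom g (b :: m)) →
      STrans S T T'
  | multUp {T T' : SState S} {p : S.Edge × Formula.Addr} {e g : S.Edge}
      {m : Formula.Addr} {n : S.Node} {b : Bool} :
      T.f p = some (.atom g (b :: m)) →
      Formula.NegOcc (S.typ g) (b :: m) →
      S.src g = n → (S.sort n = .tens ∨ S.sort n = .parr) → S.Active T n →
      S.tgt e = some n →
      S.pIdx e = (if b then 1 else 0) →
      (∀ q, q ≠ p → T'.f q = T.f q) →
      T'.f p = some (.atom e m) →
      STrans S T T'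
  | lockTok {T T' : SState S} {p : S.Edge × Formula.Addr} {e : S.Edge}
      {b' : S.Node} :
      T.f p = some (.atom e []) →
      S.typ e = .bot →
      S.src e = b' → S.sort b' = .bot → S.Active T b' →
      (∀ q, q ≠ p → T'.f q = T.f q) →
      T'.f p = some (.lock e 0) →
      STrans S T T'
  | oneSpawn {T T' : SState S} {n : S.Node} {e : S.Edge} :
      S.sort n = .one → S.Active T n → S.src e = n →
      T.f (e, []) = none →
      (∀ q, q ≠ (e, []) → T'.f q = T.f q) →
      T'.f (e, []) = some (.atom e []) →
      STrans S T T'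
  | syncCross {T T' : SState S} {l : S.Node} :
      S.sort l = .sync → S.Active T l →
      (∃ q e m, T.f q = some (.atom e m) ∧
        ((S.tgt e = some l ∧ (S.typ e).Positive) ∨
         (S.src e = l ∧ (S.typ e).Negative))) →
      (∀ e, ((S.tgt e = some l ∧ (S.typ e).Positive) ∨
             (S.src e = l ∧ (S.typ e).Negative)) →
        ∀ m, Formula.AtomOcc (S.typ e) m → ∃ q, T.f q = some (.atom e m)) →
      (∀ q e m, T.f q = some (.atom e m) → S.tgt e = some l → (S.typ e).Positive →
        ∃ e', S.src e' = l ∧ S.cIdx e' = S.pIdx e ∧ T'.f q = some (.atom e' m)) →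
      (∀ q e m, T.f q = some (.atom e m) → S.src e = l → (S.typ e).Negative →
        ∃ e', S.tgt e' = some l ∧ S.pIdx e' = S.cIdx e ∧ T'.f q = some (.atom e' m)) →
      (∀ q, (∀ e m, T.f q = some (.atom e m) →
          ¬(S.tgt e = some l ∧ (S.typ e).Positive) ∧
          ¬(S.src e = l ∧ (S.typ e).Negative)) →
        T'.f q = T.f q) →
      STrans S T T'

/-- A final state: its image consists of all the final positions together
with positions on the locks of boxes. -/
def SState.Final {S : Struct} (T : SState S) : Prop :=
  (∀ q v, T.f q = some v →
    (∃ e m, v = .atom e m ∧ S.FinPos (e, m)) ∨ (∃ e i, v = .lock e i)) ∧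
  (∀ e m, S.FinPos (e, m) → ∃ q, T.f q = some (.atom e m))

/-- The machine of `S` deadlocks: some maximal transition sequence from the
initial state ends in a non-final state. -/
def Deadlocks (S : Struct) : Prop :=
  ∃ T : SState S, Relation.ReflTransGen (STrans S) (initState S) T ∧
    (∀ T', ¬ STrans S T T') ∧ ¬ T.Final

/-- The machine of `S` is deadlock free: every maximal transition sequence
from the initial state ends in a final state. -/
def DeadlockFree (S : Struct) : Prop :=
  ∀ T : SState S, Relation.ReflTransGen (STrans S) (initState S) T →
    (∀ T', ¬ STrans S T T') → T.Final

/-! ## The closure of a net -/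

/-- A structure with a designated (main) conclusion. -/
structure PNet : Type 1 where
  S : Struct
  main : S.Edge

/-- The net consisting of a single `one`-link. -/
def oneNet : PNet where
  S :=
    { Edge := Unit
      Node := Unit
      edgeFintype := inferInstance
      nodeFintype := inferInstance
      edgeDecEq := inferInstance
      nodeDecEq := inferInstance
      typ := fun _ => .one
      sort := fun _ => .one
      src := fun _ => ()
      tgt := fun _ => none
      pIdx := fun _ => 0
      cIdx := fun _ => 0
      box := fun _ => none
      boxes := fun _ => ∅ }
  main := ()

/-- The net consisting of a single axiom of conclusions `A⊥, A`, with main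
conclusion `A`. -/
def axNet (A : Formula) : PNet where
  S :=
    { Edge := Bool
      Node := Unit
      edgeFintype := inferInstance
      nodeFintype := inferInstance
      edgeDecEq := inferInstance
      nodeDecEq := inferInstance
      typ := fun e => if e then A else A.dual
      sort := fun _ => .ax
      src := fun _ => ()
      tgt := fun _ => none
      pIdx := fun _ => 0
      cIdx := fun e => if e then 1 else 0
      box := fun _ => none
      boxes := fun _ => ∅ }
  main := true

/-- Joining the main conclusions of two nets by a binary link of sort `s`
and conclusion type `C`. -/
def joinNet (s : LinkSort) (C : Formula) (P Q : PNet) : PNet where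
  S :=
    { Edge := Option (P.S.Edge ⊕ Q.S.Edge)
      Node := Option (P.S.Node ⊕ Q.S.Node)
      edgeFintype := inferInstance
      nodeFintype := inferInstance
      edgeDecEq := inferInstance
      nodeDecEq := inferInstance
      typ := fun e =>
        match e with
        | none => C
        | some (.inl x) => P.S.typ x
        | some (.inr y) => Q.S.typ y
      sort := fun n =>
        match n with
        | none => s
        | some (.inl x) => P.S.sort x
        | some (.inr y) => Q.S.sort y
      src := fun e =>
        match e with
        | none => none
        | some (.inl x) => some (.inl (P.S.src x))
        | some (.inr y) => some (.inr (Q.S.src y))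
      tgt := fun e =>
        match e with
        | none => none
        | some (.inl x) =>
            if x = P.main then some none
            else (P.S.tgt x).map fun n => some (.inl n)
        | some (.inr y) =>
            if y = Q.main then some none
            else (Q.S.tgt y).map fun n => some (.inr n)
      pIdx := fun e =>
        match e with
        | none => 0
        | some (.inl x) => if x = P.main then 0 else P.S.pIdx x
        | some (.inr y) => if y = Q.main then 1 else Q.S.pIdx y
      cIdx := fun e =>
        match e with
        | none => 0
        | some (.inl x) => P.S.cIdx x
        | some (.inr y) => Q.S.cIdx y
      box := fun n =>
        match n with
        | none => none
        | some (.inl x) => (P.S.box x).map fun m => some (.inl m)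
        | some (.inr y) => (Q.S.box y).map fun m => some (.inr m)
      boxes := fun n =>
        match n with
        | none => ∅
        | some (.inl x) => (P.S.boxes x).image fun m => some (.inl m)
        | some (.inr y) => (Q.S.boxes y).image fun m => some (.inr m) }
  main := none

/-- The net `R°(A)`, by induction on `A`: it has conclusions `Γ, A` with no
occurrence of `⊥` in `Γ`, and main conclusion `A`. -/
def circNet : Formula → PNet
  | .one => oneNet
  | .bot => axNet .bot
  | .var n => axNet (.var n)
  | .covar n => axNet (.covar n)
  | .tens A B => joinNet .tens (.tens A B) (circNet A) (circNet B)
  | .parr A B => joinNet .parr (.parr A B) (circNet A) (circNet B)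

/-- The conclusions of `R` containing an occurrence of `⊥`. -/
abbrev BadC (R : Struct) :=
  {e : R.Edge // R.tgt e = none ∧ (R.typ e).hasBotB = true}

/-- The closure `R̂` of `R`: each conclusion `A` of `R` containing `⊥` is cut
against the main conclusion of a copy of `R°(A⊥)`. -/
def netClosure (R : Struct) : Struct where
  Edge := R.Edge ⊕ Σ e : BadC R, (circNet (R.typ e.val).dual).S.Edge
  Node := R.Node ⊕ ((Σ e : BadC R, (circNet (R.typ e.val).dual).S.Node) ⊕ BadC R)
  edgeFintype := inferInstance
  nodeFintype := inferInstance
  edgeDecEq := inferInstance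
  nodeDecEq := inferInstance
  typ := fun e =>
    match e with
    | .inl e => R.typ e
    | .inr ⟨b, x⟩ => (circNet (R.typ b.val).dual).S.typ x
  sort := fun n =>
    match n with
    | .inl n => R.sort n
    | .inr (.inl ⟨b, x⟩) => (circNet (R.typ b.val).dual).S.sort x
    | .inr (.inr _) => .cut
  src := fun e =>
    match e with
    | .inl e => .inl (R.src e)
    | .inr ⟨b, x⟩ => .inr (.inl ⟨b, (circNet (R.typ b.val).dual).S.src x⟩)
  tgt := fun e =>
    match e with
    | .inl e =>
        if h : R.tgt e = none ∧ (R.typ e).hasBotB = true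
        then some (.inr (.inr ⟨e, h⟩))
        else (R.tgt e).map Sum.inl
    | .inr ⟨b, x⟩ =>
        if x = (circNet (R.typ b.val).dual).main
        then some (.inr (.inr b))
        else ((circNet (R.typ b.val).dual).S.tgt x).map fun n => .inr (.inl ⟨b, n⟩)
  pIdx := fun e =>
    match e with
    | .inl e => R.pIdx e
    | .inr ⟨b, x⟩ =>
        if x = (circNet (R.typ b.val).dual).main then 1
        else (circNet (R.typ b.val).dual).S.pIdx x
  cIdx := fun e =>
    match e with
    | .inl e => R.cIdx e
    | .inr ⟨b, x⟩ => (circNet (R.typ b.val).dual).S.cIdx x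
  box := fun n =>
    match n with
    | .inl n => (R.box n).map Sum.inl
    | .inr (.inl ⟨b, x⟩) =>
        ((circNet (R.typ b.val).dual).S.box x).map fun m => .inr (.inl ⟨b, m⟩)
    | .inr (.inr _) => none
  boxes := fun n =>
    match n with
    | .inl n => (R.boxes n).image Sum.inl
    | .inr (.inl ⟨b, x⟩) =>
        ((circNet (R.typ b.val).dual).S.boxes x).image fun m => .inr (.inl ⟨b, m⟩)
    | .inr (.inr _) => ∅


/-! Follow a single token. Under well-formedness a token move is left-unique: the link through
which a token arrives at an atom occurrence is determined by the occurrence (it is the link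
above the edge if the occurrence is positive, the link below it if it is negative). A token
starts on an initial position or on the conclusion of a `one`-link, which no move reaches, so
its trajectory never returns to an earlier position; since only finitely many positions allow a
move, every token moves finitely often. There are finitely many tokens, and every transition
changes the value of one of them (for a sync link, because no edge is a premiss and a
conclusion of the same link, by correctness), so there are finitely many transitions. -/

inductive Relation.ReachesIn {α : Type*} (r : α → α → Prop) (a : α) : ℕ → α → Prop
  | refl : ReachesIn r a 0 a
  | tail {n : ℕ} {b c : α} : ReachesIn r a n b → r b c → ReachesIn r a (n + 1) c

theorem Relation.ReachesIn.length_unique {α : Type*} {r : α → α → Prop}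
    (hr : Relator.LeftUnique r) {a : α} (ha : ∀ b, ¬ r b a) {m n : ℕ} {c : α}
    (hm : ReachesIn r a m c) (hn : ReachesIn r a n c) : m = n := by
  induction hm generalizing n with
  | refl => cases hn with
    | refl => rfl
    | tail _ h => exact absurd h (ha _)
  | tail hm' hbc ih => cases hn with
    | refl => exact absurd hbc (ha _)
    | tail hn' hbc' => rw [ih (hr hbc hbc' ▸ hn')]

theorem finite_setOf_ne_succ_of_lazyWalk {α : Type*} {r : α → α → Prop}
    (hr : Relator.LeftUnique r) (hfin : {a | ∃ b, r a b}.Finite) {w : ℕ → α}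
    (hroot : ∀ a, ¬ r a (w 0)) (hw : ∀ n, w (n + 1) = w n ∨ r (w n) (w (n + 1))) :
    {n | w (n + 1) ≠ w n}.Finite := by
  classical
  let moves := {n | w (n + 1) ≠ w n}
  -- `depth n` counts the moves before time `n`: it is the length of an `r`-path from `w 0` to
  -- `w n`, hence a function of `w n` by left-uniqueness, and it increases at every move.
  let depth : ℕ → ℕ := fun n => ∑ k ∈ Finset.range n, if k ∈ moves then 1 else 0
  have depth_succ : ∀ n, depth (n + 1) = depth n + if n ∈ moves then 1 else 0 :=
    fun n => Finset.sum_range_succ _ n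
  have reaches : ∀ n, Relation.ReachesIn r (w 0) (depth n) (w n) := by
    intro n
    induction n with
    | zero => exact .refl
    | succ n ih =>
      by_cases hn : n ∈ moves
      · rw [depth_succ, if_pos hn]
        exact ih.tail ((hw n).resolve_left hn)
      · rw [depth_succ, if_neg hn, add_zero, not_not.1 hn]
        exact ih
  have depth_mono : Monotone depth :=
    monotone_nat_of_le_succ fun n => by rw [depth_succ]; exact Nat.le_add_right _ _
  have depth_lt : ∀ i ∈ moves, ∀ j, i < j → depth i < depth j := fun i hi j hij =>
    calc depth i < depth (i + 1) := by rw [depth_succ, if_pos hi]; exact Nat.lt_succ_self _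
      _ ≤ depth j := depth_mono hij
  have hinj : Set.InjOn w moves := by
    intro i hi j hj hij
    have := (reaches i).length_unique hr hroot (hij ▸ reaches j)
    rcases lt_trichotomy i j with h | h | h
    · exact absurd this (depth_lt i hi j h).ne
    · exact h
    · exact absurd this (depth_lt j hj i h).ne'
  refine Set.Finite.of_finite_image (hfin.subset ?_) hinj
  rintro _ ⟨n, hn, rfl⟩
  exact ⟨_, (hw n).resolve_left hn⟩

namespace Formula

theorem dual_dual (A : Formula) : A.dual.dual = A := by
  induction A <;> simp [dual, *]

theorem sub_dual (A : Formula) (m : Addr) : A.dual.sub m = (A.sub m).map dual := by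
  induction A generalizing m with
  | tens B C ihB ihC => rcases m with _ | ⟨_ | _, m⟩ <;> simp [dual, sub, ihB, ihC]
  | parr B C ihB ihC => rcases m with _ | ⟨_ | _, m⟩ <;> simp [dual, sub, ihB, ihC]
  | _ => rcases m with _ | ⟨_ | _, m⟩ <;> simp [dual, sub]

theorem PosOcc.dual {A : Formula} {m : Addr} (h : PosOcc A m) : NegOcc A.dual m := by
  obtain ⟨a, ha, h⟩ := h
  refine ⟨a.dual, by rw [sub_dual, ha]; rfl, ?_⟩
  rcases h with rfl | ⟨n, rfl⟩
  exacts [Or.inl rfl, Or.inr ⟨n, rfl⟩]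

theorem NegOcc.dual {A : Formula} {m : Addr} (h : NegOcc A m) : PosOcc A.dual m := by
  obtain ⟨a, ha, h⟩ := h
  refine ⟨a.dual, by rw [sub_dual, ha]; rfl, ?_⟩
  rcases h with rfl | ⟨n, rfl⟩
  exacts [Or.inl rfl, Or.inr ⟨n, rfl⟩]

theorem PosOcc.not_negOcc {A : Formula} {m : Addr} (hp : PosOcc A m) : ¬ NegOcc A m := by
  rintro ⟨b, hb, hn⟩
  obtain ⟨a, ha, hp⟩ := hp
  obtain rfl : a = b := Option.some.inj (ha.symm.trans hb)
  rcases hp with rfl | ⟨n, rfl⟩ <;> rcases hn with h | ⟨k, h⟩ <;> cases h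

theorem Positive.posOcc {A : Formula} (hA : Positive A) {m : Addr} (h : AtomOcc A m) :
    PosOcc A m := by
  induction hA generalizing m with
  | one =>
    obtain ⟨a, ha, -⟩ := h
    rcases m with _ | ⟨_, m⟩
    · exact ⟨.one, rfl, Or.inl rfl⟩
    · simp [sub] at ha
  | tens _ _ ihA ihB =>
    obtain ⟨a, ha, hat⟩ := h
    rcases m with _ | ⟨_ | _, m⟩
    · cases ha; cases hat
    exacts [ihA ⟨a, ha, hat⟩, ihB ⟨a, ha, hat⟩]

theorem Negative.negOcc {A : Formula} (hA : Negative A) {m : Addr} (h : AtomOcc A m) :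
    NegOcc A m := by
  induction hA generalizing m with
  | bot =>
    obtain ⟨a, ha, -⟩ := h
    rcases m with _ | ⟨_, m⟩
    · exact ⟨.bot, rfl, Or.inl rfl⟩
    · simp [sub] at ha
  | parr _ _ ihA ihB =>
    obtain ⟨a, ha, hat⟩ := h
    rcases m with _ | ⟨_ | _, m⟩
    · cases ha; cases hat
    exacts [ihA ⟨a, ha, hat⟩, ihB ⟨a, ha, hat⟩]

theorem finite_setOf_atomOcc : ∀ A : Formula, {m | A.AtomOcc m}.Finite
  | tens A B | parr A B => by
    refine (((finite_setOf_atomOcc A).image (List.cons false)).union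
      ((finite_setOf_atomOcc B).image (List.cons true))).subset ?_
    rintro (_ | ⟨_ | _, m⟩) ⟨a, ha, hat⟩
    · cases ha; cases hat
    · exact Or.inl ⟨m, ⟨a, ha, hat⟩, rfl⟩
    · exact Or.inr ⟨m, ⟨a, ha, hat⟩, rfl⟩
  | one | bot | var _ | covar _ => by
    refine (Set.finite_singleton []).subset ?_
    rintro (_ | ⟨_, m⟩) ⟨a, ha, -⟩
    · rfl
    · simp [sub] at ha

end Formula

theorem Finset.eq_of_mem_pair_of_ne {α : Type*} [DecidableEq α] {x y a b c : α}
    (ha : a ∈ ({x, y} : Finset α)) (hb : b ∈ ({x, y} : Finset α))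
    (hc : c ∈ ({x, y} : Finset α)) (hba : b ≠ a) (hca : c ≠ a) : b = c := by
  simp only [Finset.mem_insert, Finset.mem_singleton] at ha hb hc
  rcases ha with rfl | rfl <;> rcases hb with rfl | rfl <;> rcases hc with rfl | rfl <;>
    simp_all

theorem Formula.dual_of_mem_pair {α : Type*} [DecidableEq α] {t : α → Formula} {x y a b : α}
    (hxy : t y = (t x).dual) (ha : a ∈ ({x, y} : Finset α)) (hb : b ∈ ({x, y} : Finset α))
    (hba : b ≠ a) : t b = (t a).dual := by
  simp only [Finset.mem_insert, Finset.mem_singleton] at ha hb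
  rcases ha with rfl | rfl <;> rcases hb with rfl | rfl
  · exact absurd rfl hba
  · exact hxy
  · rw [hxy, Formula.dual_dual]
  · exact absurd rfl hba

namespace Struct

variable {R : Struct}

@[simp]
theorem mem_concls {e : R.Edge} {n : R.Node} : e ∈ R.concls n ↔ R.src e = n := by
  simp [concls]

@[simp]
theorem mem_prems {e : R.Edge} {n : R.Node} : e ∈ R.prems n ↔ R.tgt e = some n := by
  simp [prems]

theorem WF.typ_of_ax (hWF : R.WF) {a : R.Node} {e f : R.Edge} (ha : R.sort a = .ax)
    (he : R.src e = a) (hf : R.src f = a) (hfe : f ≠ e) : R.typ f = (R.typ e).dual := by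
  obtain ⟨-, x, y, -, hc, hxy⟩ := hWF.1 a ha
  exact Formula.dual_of_mem_pair hxy (hc ▸ mem_concls.2 he) (hc ▸ mem_concls.2 hf) hfe

theorem WF.eq_of_ax (hWF : R.WF) {a : R.Node} {e f₁ f₂ : R.Edge} (ha : R.sort a = .ax)
    (he : R.src e = a) (h₁ : R.src f₁ = a) (h₂ : R.src f₂ = a) (h₁e : f₁ ≠ e)
    (h₂e : f₂ ≠ e) : f₁ = f₂ := by
  obtain ⟨-, x, y, -, hc, -⟩ := hWF.1 a ha
  exact Finset.eq_of_mem_pair_of_ne (hc ▸ mem_concls.2 he) (hc ▸ mem_concls.2 h₁)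
    (hc ▸ mem_concls.2 h₂) h₁e h₂e

theorem WF.typ_of_cut (hWF : R.WF) {c : R.Node} {e f : R.Edge} (hc : R.sort c = .cut)
    (he : R.tgt e = some c) (hf : R.tgt f = some c) (hfe : f ≠ e) :
    R.typ f = (R.typ e).dual := by
  obtain ⟨-, x, y, -, hp, hxy⟩ := hWF.2.1 c hc
  exact Formula.dual_of_mem_pair hxy (hp ▸ mem_prems.2 he) (hp ▸ mem_prems.2 hf) hfe

theorem WF.eq_of_cut (hWF : R.WF) {c : R.Node} {e f₁ f₂ : R.Edge} (hc : R.sort c = .cut)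
    (he : R.tgt e = some c) (h₁ : R.tgt f₁ = some c) (h₂ : R.tgt f₂ = some c)
    (h₁e : f₁ ≠ e) (h₂e : f₂ ≠ e) : f₁ = f₂ := by
  obtain ⟨-, x, y, -, hp, -⟩ := hWF.2.1 c hc
  exact Finset.eq_of_mem_pair_of_ne (hp ▸ mem_prems.2 he) (hp ▸ mem_prems.2 h₁)
    (hp ▸ mem_prems.2 h₂) h₁e h₂e

theorem WF.mult_link (hWF : R.WF) {n : R.Node} (hn : R.sort n = .tens ∨ R.sort n = .parr) :
    ∃ x y g, R.prems n = {x, y} ∧ R.pIdx x = 0 ∧ R.pIdx y = 1 ∧ R.concls n = {g} ∧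
      ∀ (b : Bool) (m : Formula.Addr),
        (R.typ g).sub (b :: m) = (R.typ (if b then y else x)).sub m := by
  rcases hn with hn | hn
  · obtain ⟨x, y, g, -, hp, hx, hy, hc, hg⟩ := hWF.2.2.1 n hn
    exact ⟨x, y, g, hp, hx, hy, hc, fun b m => by rw [hg]; cases b <;> rfl⟩
  · obtain ⟨x, y, g, -, hp, hx, hy, hc, hg⟩ := hWF.2.2.2.1 n hn
    exact ⟨x, y, g, hp, hx, hy, hc, fun b m => by rw [hg]; cases b <;> rfl⟩

theorem WF.eq_of_mult_concl (hWF : R.WF) {n : R.Node} (hn : R.sort n = .tens ∨ R.sort n = .parr)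
    {g₁ g₂ : R.Edge} (h₁ : R.src g₁ = n) (h₂ : R.src g₂ = n) : g₁ = g₂ := by
  obtain ⟨-, -, g, -, -, -, hc, -⟩ := hWF.mult_link hn
  have h₁' := hc ▸ mem_concls.2 h₁
  have h₂' := hc ▸ mem_concls.2 h₂
  rw [Finset.mem_singleton] at h₁' h₂'
  rw [h₁', h₂']

theorem WF.eq_of_mult_prem (hWF : R.WF) {n : R.Node} (hn : R.sort n = .tens ∨ R.sort n = .parr)
    {e₁ e₂ : R.Edge} (h₁ : R.tgt e₁ = some n) (h₂ : R.tgt e₂ = some n)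
    (h : R.pIdx e₁ = R.pIdx e₂) : e₁ = e₂ := by
  obtain ⟨x, y, -, hp, hx, hy, -⟩ := hWF.mult_link hn
  have h₁' := hp ▸ mem_prems.2 h₁
  have h₂' := hp ▸ mem_prems.2 h₂
  simp only [Finset.mem_insert, Finset.mem_singleton] at h₁' h₂'
  rcases h₁' with rfl | rfl <;> rcases h₂' with rfl | rfl <;> simp_all

theorem WF.sub_mult (hWF : R.WF) {n : R.Node} (hn : R.sort n = .tens ∨ R.sort n = .parr)
    {e g : R.Edge} {b : Bool} (he : R.tgt e = some n) (hg : R.src g = n)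
    (hb : R.pIdx e = if b then 1 else 0) (m : Formula.Addr) :
    (R.typ g).sub (b :: m) = (R.typ e).sub m := by
  obtain ⟨x, y, g', hp, hx, hy, hc, hsub⟩ := hWF.mult_link hn
  rw [hWF.eq_of_mult_concl hn hg (mem_concls.1 (hc ▸ Finset.mem_singleton_self g')), hsub]
  congr 2
  apply hWF.eq_of_mult_prem hn (mem_prems.1 ?_) he
  · cases b <;> simp [hx, hy, hb]
  · cases b <;> simp [hp]

theorem WF.typ_of_sync (hWF : R.WF) {l : R.Node} {e f : R.Edge} (hl : R.sort l = .sync)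
    (he : R.tgt e = some l) (hf : R.src f = l) (h : R.cIdx f = R.pIdx e) : R.typ f = R.typ e :=
  (hWF.2.2.2.2.2.2.1 l hl).2.2.2 e (mem_prems.2 he) f (mem_concls.2 hf) h

theorem WF.eq_of_sync_prem (hWF : R.WF) {l : R.Node} {f e₁ e₂ : R.Edge} (hl : R.sort l = .sync)
    (hf : R.src f = l) (h₁ : R.tgt e₁ = some l) (h₂ : R.tgt e₂ = some l)
    (hi₁ : R.pIdx e₁ = R.cIdx f) (hi₂ : R.pIdx e₂ = R.cIdx f) : e₁ = e₂ :=
  ((hWF.2.2.2.2.2.2.1 l hl).2.2.1 f (mem_concls.2 hf)).unique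
    ⟨mem_prems.2 h₁, hi₁⟩ ⟨mem_prems.2 h₂, hi₂⟩

theorem WF.eq_of_sync_concl (hWF : R.WF) {l : R.Node} {e f₁ f₂ : R.Edge} (hl : R.sort l = .sync)
    (he : R.tgt e = some l) (h₁ : R.src f₁ = l) (h₂ : R.src f₂ = l)
    (hi₁ : R.cIdx f₁ = R.pIdx e) (hi₂ : R.cIdx f₂ = R.pIdx e) : f₁ = f₂ :=
  ((hWF.2.2.2.2.2.2.1 l hl).2.1 e (mem_prems.2 he)).unique
    ⟨mem_concls.2 h₁, hi₁⟩ ⟨mem_concls.2 h₂, hi₂⟩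

theorem WF.typ_of_one (hWF : R.WF) {e : R.Edge} (he : R.sort (R.src e) = .one) :
    R.typ e = .one := by
  obtain ⟨-, e', hc, he'⟩ := hWF.2.2.2.2.1 _ he
  have h := mem_concls.2 (rfl : R.src e = R.src e)
  rw [hc, Finset.mem_singleton] at h
  rwa [h]

theorem WF.not_negOcc_of_one (hWF : R.WF) {e : R.Edge} (he : R.sort (R.src e) = .one)
    (m : Formula.Addr) : ¬ Formula.NegOcc (R.typ e) m := fun hocc => by
  rw [hWF.typ_of_one he] at hocc
  exact (Formula.Positive.one.posOcc hocc.atomOcc).not_negOcc hocc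

theorem Correct.tgt_ne_src (hC : R.Correct) (e : R.Edge) : R.tgt e ≠ some (R.src e) := by
  intro he
  have hfin : ∀ i j : Fin (0 + 1), i = j := Subsingleton.elim (α := Fin 1)
  apply hC (R.box (R.src e))
  refine ⟨0, fun _ => R.src e, fun _ => e, fun i j _ => hfin i j, fun i j _ => hfin i j,
    fun _ => ?_, fun _ _ i _ j _ => hfin i j, fun _ _ i _ j _ => hfin i j⟩
  exact ⟨_, he, Or.inl rfl, Or.inl ⟨Or.inl ⟨rfl, rfl⟩, Or.inl ⟨rfl, rfl⟩⟩⟩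

/-- A move of a single token in a transition of `STrans`. The sync rules also record that the
token sits on an atom occurrence, so that only finitely many values can move. -/
inductive Move (R : Struct) : R.PosVal → R.PosVal → Prop
  | ax {e e' : R.Edge} {m : Formula.Addr} :
      Formula.NegOcc (R.typ e) m → R.sort (R.src e) = .ax →
      R.src e' = R.src e → e' ≠ e → Move R (.atom e m) (.atom e' m)
  | cut {e e' : R.Edge} {m : Formula.Addr} {c : R.Node} :
      Formula.PosOcc (R.typ e) m → R.tgt e = some c → R.sort c = .cut →
      R.tgt e' = some c → e' ≠ e → Move R (.atom e m) (.atom e' m)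
  | multDown {e g : R.Edge} {m : Formula.Addr} {n : R.Node} {b : Bool} :
      Formula.PosOcc (R.typ e) m → R.tgt e = some n →
      (R.sort n = .tens ∨ R.sort n = .parr) → R.src g = n →
      R.pIdx e = (if b then 1 else 0) → Move R (.atom e m) (.atom g (b :: m))
  | multUp {e g : R.Edge} {m : Formula.Addr} {n : R.Node} {b : Bool} :
      Formula.NegOcc (R.typ g) (b :: m) → R.src g = n →
      (R.sort n = .tens ∨ R.sort n = .parr) → R.tgt e = some n →
      R.pIdx e = (if b then 1 else 0) → Move R (.atom g (b :: m)) (.atom e m)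
  | lock {e : R.Edge} :
      R.typ e = .bot → R.sort (R.src e) = .bot → Move R (.atom e []) (.lock e 0)
  | syncPos {e e' : R.Edge} {m : Formula.Addr} {l : R.Node} :
      Formula.AtomOcc (R.typ e) m → (R.typ e).Positive → R.tgt e = some l →
      R.sort l = .sync → R.src e' = l → R.cIdx e' = R.pIdx e →
      Move R (.atom e m) (.atom e' m)
  | syncNeg {e e' : R.Edge} {m : Formula.Addr} {l : R.Node} :
      Formula.AtomOcc (R.typ e) m → (R.typ e).Negative → R.src e = l →
      R.sort l = .sync → R.tgt e' = some l → R.pIdx e' = R.cIdx e →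
      Move R (.atom e m) (.atom e' m)

/-- The predecessors of a downward-moving token at the occurrence `m` of `f`, read off the
link `R.src f`; `EntersFromTgt` is the upward analogue, read off `R.tgt f`. -/
inductive EntersFromSrc : R.PosVal → R.Edge → Formula.Addr → Prop
  | ax {e f : R.Edge} {m : Formula.Addr} :
      R.sort (R.src f) = .ax → R.src e = R.src f → e ≠ f → EntersFromSrc (.atom e m) f m
  | mult {e f : R.Edge} {m : Formula.Addr} {b : Bool} :
      (R.sort (R.src f) = .tens ∨ R.sort (R.src f) = .parr) → R.tgt e = some (R.src f) →
      R.pIdx e = (if b then 1 else 0) → EntersFromSrc (.atom e m) f (b :: m)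
  | sync {e f : R.Edge} {m : Formula.Addr} :
      R.sort (R.src f) = .sync → R.tgt e = some (R.src f) → R.pIdx e = R.cIdx f →
      EntersFromSrc (.atom e m) f m

inductive EntersFromTgt : R.PosVal → R.Edge → Formula.Addr → Prop
  | cut {e f : R.Edge} {m : Formula.Addr} {c : R.Node} :
      R.tgt f = some c → R.sort c = .cut → R.tgt e = some c → e ≠ f →
      EntersFromTgt (.atom e m) f m
  | mult {g f : R.Edge} {m : Formula.Addr} {n : R.Node} {b : Bool} :
      R.tgt f = some n → (R.sort n = .tens ∨ R.sort n = .parr) → R.src g = n →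
      R.pIdx f = (if b then 1 else 0) → EntersFromTgt (.atom g (b :: m)) f m
  | sync {e f : R.Edge} {m : Formula.Addr} {l : R.Node} :
      R.tgt f = some l → R.sort l = .sync → R.src e = l → R.cIdx e = R.pIdx f →
      EntersFromTgt (.atom e m) f m

theorem EntersFromSrc.unique (hWF : R.WF) {u v : R.PosVal} {f : R.Edge} {m : Formula.Addr}
    (hu : R.EntersFromSrc u f m) (hv : R.EntersFromSrc v f m) : u = v := by
  cases hu with
  | ax hs h₁ hne₁ => cases hv with
    | ax _ h₂ hne₂ => rw [hWF.eq_of_ax hs rfl h₁ h₂ hne₁ hne₂]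
    | _ => simp_all
  | mult hs h₁ hb₁ => cases hv with
    | mult _ h₂ hb₂ => rw [hWF.eq_of_mult_prem hs h₁ h₂ (hb₁.trans hb₂.symm)]
    | _ => rcases hs with hs | hs <;> simp_all
  | sync hs h₁ hi₁ => cases hv with
    | sync _ h₂ hi₂ => rw [hWF.eq_of_sync_prem hs rfl h₁ h₂ hi₁ hi₂]
    | _ => simp_all

theorem EntersFromTgt.unique (hWF : R.WF) {u v : R.PosVal} {f : R.Edge} {m : Formula.Addr}
    (hu : R.EntersFromTgt u f m) (hv : R.EntersFromTgt v f m) : u = v := by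
  cases hu with
  | cut hf₁ hs h₁ hne₁ => cases hv with
    | cut hf₂ _ h₂ hne₂ =>
      cases hf₁.symm.trans hf₂
      rw [hWF.eq_of_cut hs hf₁ h₁ h₂ hne₁ hne₂]
    | _ => simp_all
  | @mult g₁ _ _ _ b₁ hf₁ hs h₁ hb₁ => cases hv with
    | @mult g₂ _ _ _ b₂ hf₂ _ h₂ hb₂ =>
      cases hf₁.symm.trans hf₂
      obtain rfl : g₁ = g₂ := hWF.eq_of_mult_concl hs h₁ h₂
      obtain rfl : b₁ = b₂ := by cases b₁ <;> cases b₂ <;> simp_all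
      rfl
    | _ => rcases hs with hs | hs <;> simp_all
  | sync hf₁ hs h₁ hi₁ => cases hv with
    | sync hf₂ _ h₂ hi₂ =>
      cases hf₁.symm.trans hf₂
      rw [hWF.eq_of_sync_concl hs hf₁ h₁ h₂ hi₁ hi₂]
    | _ => simp_all

theorem Move.entersFrom (hWF : R.WF) {u : R.PosVal} {f : R.Edge} {m : Formula.Addr}
    (h : R.Move u (.atom f m)) :
    (Formula.PosOcc (R.typ f) m ∧ R.EntersFromSrc u f m) ∨
      (Formula.NegOcc (R.typ f) m ∧ R.EntersFromTgt u f m) := by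
  cases h with
  | ax hocc hs hsrc hne =>
    refine Or.inl ⟨?_, .ax (hsrc ▸ hs) hsrc.symm hne.symm⟩
    rw [hWF.typ_of_ax hs rfl hsrc hne]
    exact hocc.dual
  | cut hocc he hc hf hne =>
    refine Or.inr ⟨?_, .cut hf hc he hne.symm⟩
    rw [hWF.typ_of_cut hc he hf hne]
    exact hocc.dual
  | multDown hocc he hn hg hb =>
    subst hg
    exact Or.inl ⟨by rwa [Formula.PosOcc, hWF.sub_mult hn he rfl hb], .mult hn he hb⟩
  | multUp hocc hg hn he hb =>
    exact Or.inr ⟨by rwa [Formula.NegOcc, ← hWF.sub_mult hn he hg hb], .mult he hn hg hb⟩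
  | syncPos hocc hpos he hl hf hi =>
    subst hf
    refine Or.inl ⟨?_, .sync hl he hi.symm⟩
    rw [hWF.typ_of_sync hl he rfl hi]
    exact hpos.posOcc hocc
  | syncNeg hocc hneg he hl hf hi =>
    refine Or.inr ⟨?_, .sync hf hl he hi.symm⟩
    rw [← hWF.typ_of_sync hl hf he hi.symm]
    exact hneg.negOcc hocc

theorem Move.leftUnique (hWF : R.WF) : Relator.LeftUnique R.Move := by
  intro u v c hu hv
  cases c with
  | lock e i => cases hu; cases hv; rfl
  | atom f m =>
    rcases hu.entersFrom hWF with ⟨hp, hu⟩ | ⟨hn, hu⟩ <;>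
      rcases hv.entersFrom hWF with ⟨hp', hv⟩ | ⟨hn', hv⟩
    · exact hu.unique hWF hv
    · exact absurd hn' hp.not_negOcc
    · exact absurd hn hp'.not_negOcc
    · exact hu.unique hWF hv

def AtomPos (p : R.Edge × Formula.Addr) : Prop := Formula.AtomOcc (R.typ p.1) p.2

theorem finite_setOf_atomPos : {p : R.Edge × Formula.Addr | R.AtomPos p}.Finite :=
  (Set.finite_iUnion fun e => (Formula.finite_setOf_atomOcc (R.typ e)).image (Prod.mk e)).subset
    fun p hp => Set.mem_iUnion.2 ⟨p.1, p.2, hp, rfl⟩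

theorem Move.exists_atomPos {u v : R.PosVal} (h : R.Move u v) :
    ∃ p, R.AtomPos p ∧ u = .atom p.1 p.2 := by
  cases h with
  | ax hocc | multUp hocc => exact ⟨(_, _), hocc.atomOcc, rfl⟩
  | cut hocc | multDown hocc => exact ⟨(_, _), hocc.atomOcc, rfl⟩
  | syncPos hocc | syncNeg hocc => exact ⟨(_, _), hocc, rfl⟩
  | @lock e he => exact ⟨(e, []), ⟨.bot, by simp [he, Formula.sub], trivial⟩, rfl⟩

theorem Move.not_to_initPos (hWF : R.WF) {p : R.Edge × Formula.Addr} (hp : R.InitPos p)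
    (u : R.PosVal) : ¬ R.Move u (.atom p.1 p.2) := fun h => by
  rcases h.entersFrom hWF with ⟨hocc, -⟩ | ⟨-, hu⟩
  · exact hocc.not_negOcc hp.2
  · cases hu <;> simp_all [InitPos]

theorem Move.not_to_one (hWF : R.WF) {e : R.Edge} (he : R.sort (R.src e) = .one)
    (u : R.PosVal) : ¬ R.Move u (.atom e []) := fun h => by
  rcases h.entersFrom hWF with ⟨-, hu⟩ | ⟨hocc, -⟩
  · cases hu <;> simp_all
  · exact hWF.not_negOcc_of_one he _ hocc

/-- The change of the value of one token in a transition; `none` is the value of a token that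
has not been spawned yet. -/
inductive TokenStep (R : Struct) : Option R.PosVal → Option R.PosVal → Prop
  | spawn {e : R.Edge} : R.sort (R.src e) = .one → TokenStep R none (some (.atom e []))
  | move {v w : R.PosVal} : R.Move v w → TokenStep R (some v) (some w)

theorem TokenStep.ne_none {x y : Option R.PosVal} (h : R.TokenStep x y) : y ≠ none := by
  cases h <;> simp

theorem TokenStep.leftUnique (hWF : R.WF) : Relator.LeftUnique R.TokenStep := by
  intro x y z hx hy
  cases hx with
  | spawn he => cases hy with
    | spawn => rfl
    | move h => exact absurd h (Move.not_to_one hWF he _)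
  | move hx => cases hy with
    | spawn he => exact absurd hx (Move.not_to_one hWF he _)
    | move hy => rw [Move.leftUnique hWF hx hy]

theorem finite_setOf_tokenStep_source : {x : Option R.PosVal | ∃ y, R.TokenStep x y}.Finite := by
  refine ((R.finite_setOf_atomPos.image fun p => some (PosVal.atom p.1 p.2)).insert none).subset ?_
  rintro x ⟨y, h⟩
  cases h with
  | spawn => exact Set.mem_insert _ _
  | move h =>
    obtain ⟨p, hp, rfl⟩ := h.exists_atomPos
    exact Set.mem_insert_of_mem _ ⟨p, hp, rfl⟩

theorem not_tokenStep_initState (hWF : R.WF) (q : R.Edge × Formula.Addr)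
    (x : Option R.PosVal) : ¬ R.TokenStep x ((initState R).f q) := by
  obtain ⟨e, m⟩ := q
  intro h
  by_cases hq : R.InitPos (e, m)
  · simp only [initState, if_pos hq] at h
    cases h with
    | spawn he => exact hWF.not_negOcc_of_one he _ hq.2
    | move h => exact Move.not_to_initPos hWF hq _ h
  · simp only [initState, if_neg hq] at h
    exact h.ne_none rfl

end Struct

theorem SState.atomPos_of_ne_none {R : Struct} (hWF : R.WF) (T : SState R)
    {q : R.Edge × Formula.Addr} (hq : T.f q ≠ none) : R.AtomPos q := by
  rcases T.dom_subset q hq with h | ⟨h, hq⟩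
  · exact h.2.atomOcc
  · rw [Struct.AtomPos, hq, hWF.typ_of_one h]
    exact ⟨.one, rfl, trivial⟩

namespace STrans

variable {R : Struct} {T T' : SState R}

theorem tokenStep (h : STrans R T T') (q : R.Edge × Formula.Addr) :
    T'.f q = T.f q ∨ R.TokenStep (T.f q) (T'.f q) := by
  cases h with
  | @axUp p _ _ _ _ h₁ hocc hsrc hs _ hsrc' hne hrest h₂ =>
    rcases eq_or_ne q p with rfl | hq
    · rw [h₁, h₂]
      exact Or.inr (.move (.ax hocc (hsrc ▸ hs) (hsrc'.trans hsrc.symm) hne))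
    · exact Or.inl (hrest q hq)
  | @cutDown p _ _ _ _ h₁ hocc he hc _ he' hne hrest h₂ =>
    rcases eq_or_ne q p with rfl | hq
    · rw [h₁, h₂]
      exact Or.inr (.move (.cut hocc he hc he' hne))
    · exact Or.inl (hrest q hq)
  | @multDown p _ _ _ _ _ h₁ hocc he hn _ hg hb hrest h₂ =>
    rcases eq_or_ne q p with rfl | hq
    · rw [h₁, h₂]
      exact Or.inr (.move (.multDown hocc he hn hg hb))
    · exact Or.inl (hrest q hq)
  | @multUp p _ _ _ _ _ h₁ hocc hg hn _ he hb hrest h₂ =>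
    rcases eq_or_ne q p with rfl | hq
    · rw [h₁, h₂]
      exact Or.inr (.move (.multUp hocc hg hn he hb))
    · exact Or.inl (hrest q hq)
  | @lockTok p _ _ h₁ he hsrc hs _ hrest h₂ =>
    rcases eq_or_ne q p with rfl | hq
    · rw [h₁, h₂]
      exact Or.inr (.move (.lock he (hsrc ▸ hs)))
    · exact Or.inl (hrest q hq)
  | @oneSpawn _ e hs _ hsrc h₁ hrest h₂ =>
    rcases eq_or_ne q (e, []) with rfl | hq
    · rw [h₁, h₂]
      exact Or.inr (.spawn (hsrc ▸ hs))
    · exact Or.inl (hrest q hq)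
  | @syncCross l hl _ _ _ hpos hneg hrest =>
    by_cases hin : ∃ e m, T.f q = some (.atom e m) ∧
        ((R.tgt e = some l ∧ (R.typ e).Positive) ∨ (R.src e = l ∧ (R.typ e).Negative))
    · obtain ⟨e, m, hq, hdir⟩ := hin
      have hocc := T.val_valid q _ hq
      rw [hq]
      rcases hdir with ⟨he, hP⟩ | ⟨he, hN⟩
      · obtain ⟨e', he', hi, hq'⟩ := hpos q e m hq he hP
        exact hq' ▸ Or.inr (.move (.syncPos hocc hP he hl he' hi))
      · obtain ⟨e', he', hi, hq'⟩ := hneg q e m hq he hN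
        exact hq' ▸ Or.inr (.move (.syncNeg hocc hN he hl he' hi))
    · exact Or.inl (hrest q fun e m hq => not_or.1 fun h => hin ⟨e, m, hq, h⟩)

theorem exists_ne (hC : R.Correct) (h : STrans R T T') : ∃ q, T'.f q ≠ T.f q := by
  cases h with
  | @axUp p _ _ _ _ h₁ _ _ _ _ _ hne _ h₂ => exact ⟨p, by simp [h₁, h₂, hne]⟩
  | @cutDown p _ _ _ _ h₁ _ _ _ _ _ hne _ h₂ => exact ⟨p, by simp [h₁, h₂, hne]⟩
  | @multDown p _ _ _ _ _ h₁ _ _ _ _ _ _ _ h₂ => exact ⟨p, by simp [h₁, h₂]⟩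
  | @multUp p _ _ _ _ _ h₁ _ _ _ _ _ _ _ h₂ => exact ⟨p, by simp [h₁, h₂]⟩
  | @lockTok p _ _ h₁ _ _ _ _ _ h₂ => exact ⟨p, by simp [h₁, h₂]⟩
  | @oneSpawn _ e _ _ _ h₁ _ h₂ => exact ⟨(e, []), by simp [h₁, h₂]⟩
  | syncCross _ _ hsat _ hpos hneg _ =>
    -- by correctness no edge is a premiss of its own source, so crossing tokens change edge
    obtain ⟨q, e, m, hq, ⟨he, hP⟩ | ⟨he, hN⟩⟩ := hsat
    · obtain ⟨e', he', -, hq'⟩ := hpos q e m hq he hP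
      refine ⟨q, fun h => hC.tgt_ne_src e ?_⟩
      rw [hq, hq'] at h
      cases h
      rwa [he']
    · obtain ⟨e', he', -, hq'⟩ := hneg q e m hq he hN
      refine ⟨q, fun h => hC.tgt_ne_src e ?_⟩
      rw [hq, hq'] at h
      cases h
      rwa [he]

end STrans

/-- **Termination of the SIAM.**  There is no infinite sequence of
transitions of the machine `M_R` starting from the initial state `I_R`. -/
theorem siam_termination (R : Struct) (hWF : R.WF) (hC : R.Correct)
    (g : ℕ → SState R) (h0 : g 0 = initState R) :
    ¬ ∀ n : ℕ, STrans R (g n) (g (n + 1)) := by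
  intro hg
  have hmoves : ∀ q, {n | (g (n + 1)).f q ≠ (g n).f q}.Finite := fun q =>
    finite_setOf_ne_succ_of_lazyWalk (w := fun n => (g n).f q) (Struct.TokenStep.leftUnique hWF)
      Struct.finite_setOf_tokenStep_source
      (h0 ▸ Struct.not_tokenStep_initState hWF q) fun n => (hg n).tokenStep q
  have hcover : Set.univ ⊆
      ⋃ q ∈ {q | R.AtomPos q}, {n | (g (n + 1)).f q ≠ (g n).f q} := by
    intro n _
    obtain ⟨q, hq⟩ := (hg n).exists_ne hC
    have hsome := (((hg n).tokenStep q).resolve_left hq).ne_none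
    exact Set.mem_biUnion ((g (n + 1)).atomPos_of_ne_none hWF hsome) hq
  exact Set.infinite_univ ((Struct.finite_setOf_atomPos.biUnion fun q _ => hmoves q).subset hcover)
end

section
/- (Progress) In the linear quantum λ-calculus, if [Q, t] : A is a quantum closure in normal form — i.e. there is no distribution 𝒟 with [Q, t] ↦ 𝒟 — then t is a value. -/
/-! # A linear quantum λ-calculus (Selinger–Valiron style)

Terms, linear typing, quantum closures and their probabilistic operational
semantics, following Dal Lago, Faggian, Hasuo, Yoshimizu,
"The Geometry of Synchronization". -/

/-- Types: `A, B ::= 𝔹 | ℚ | A ⊸ B | A ⊗ B`. -/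
inductive Ty : Type
  | bool : Ty
  | qbit : Ty
  | lolli : Ty → Ty → Ty
  | tensor : Ty → Ty → Ty
  deriving DecidableEq

/-- `Ty.qpow n` is `ℚ^{⊗(n+1)}`. -/
def Ty.qpow : ℕ → Ty
  | 0 => .qbit
  | n + 1 => .tensor .qbit (Ty.qpow n)

/-- Terms of the linear quantum λ-calculus.  λ-variables are de Bruijn
indices; quantum variables are names (natural numbers); `UO` is the (finite)
set of unitary-operator symbols.  `lam` binds one variable, `lett` (the
`let ⟨x,y⟩ = t in u` construct) binds two variables in its second argument. -/
inductive QTm (UO : Type) : Type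
  | var : ℕ → QTm UO
  | qvar : ℕ → QTm UO
  | app : QTm UO → QTm UO → QTm UO
  | lam : QTm UO → QTm UO
  | pair : QTm UO → QTm UO → QTm UO
  | lett : QTm UO → QTm UO → QTm UO
  | new : QTm UO
  | tt : QTm UO
  | ff : QTm UO
  | meas : QTm UO
  | unit : UO → QTm UO
  | ite : QTm UO → QTm UO → QTm UO → QTm UO

namespace QTm

variable {UO : Type}

/-- Shifting of the de Bruijn indices `≥ d` by one. -/
def lift (d : ℕ) : QTm UO → QTm UO
  | .var k => if k < d then .var k else .var (k + 1)
  | .qvar r => .qvar r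
  | .app t u => .app (t.lift d) (u.lift d)
  | .lam t => .lam (t.lift (d + 1))
  | .pair t u => .pair (t.lift d) (u.lift d)
  | .lett t u => .lett (t.lift d) (u.lift (d + 2))
  | .new => .new
  | .tt => .tt
  | .ff => .ff
  | .meas => .meas
  | .unit g => .unit g
  | .ite t u v => .ite (t.lift d) (u.lift d) (v.lift d)

/-- Capture-avoiding substitution of `u` for the de Bruijn variable `j`. -/
def substAt : ℕ → QTm UO → QTm UO → QTm UO
  | j, u, .var k => if k < j then .var k else if k = j then u else .var (k - 1)
  | _, _, .qvar r => .qvar r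
  | j, u, .app t s => .app (substAt j u t) (substAt j u s)
  | j, u, .lam t => .lam (substAt (j + 1) (u.lift 0) t)
  | j, u, .pair t s => .pair (substAt j u t) (substAt j u s)
  | j, u, .lett t s => .lett (substAt j u t) (substAt (j + 2) ((u.lift 0).lift 0) s)
  | _, _, .new => .new
  | _, _, .tt => .tt
  | _, _, .ff => .ff
  | _, _, .meas => .meas
  | _, _, .unit g => .unit g
  | j, u, .ite t s v => .ite (substAt j u t) (substAt j u s) (substAt j u v)

end QTm

/-- The `n+1`-tuple `⟨r₀, …, r_n⟩` of quantum variables (as nested pairs). -/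
def qtuple {UO : Type} : (n : ℕ) → (Fin (n + 1) → ℕ) → QTm UO
  | 0, r => .qvar (r 0)
  | n + 1, r => .pair (.qvar (r 0)) (qtuple n fun i => r i.succ)

/-! ## Linear typing -/

/-- Typing environments for λ-variables: the de Bruijn variable `i` has type
`A` in `Γ` when the `i`-th entry of `Γ` is `some A` (absent entries and
entries `none` mean that the variable is not available). -/
abbrev Ctx := List (Option Ty)

/-- The entry of a context at position `j`. -/
def centry (Γ : Ctx) (j : ℕ) : Option Ty := (Γ[j]?).join

/-- The empty (null) context: no variable is available. -/
def CtxNull (Γ : Ctx) : Prop := ∀ j, centry Γ j = none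

/-- The context makes available exactly the variable `i`, with type `A`. -/
def CtxUses (Γ : Ctx) (i : ℕ) (A : Ty) : Prop :=
  centry Γ i = some A ∧ ∀ j, j ≠ i → centry Γ j = none

/-- Splitting of a context into two disjoint parts. -/
def CtxSplit (Γ Γ₁ Γ₂ : Ctx) : Prop :=
  ∀ j, (centry Γ₁ j = none ∧ centry Γ j = centry Γ₂ j) ∨
       (centry Γ₂ j = none ∧ centry Γ j = centry Γ₁ j)

/-- Typing judgments `Θ, V ⊢ t : A` of the linear quantum λ-calculus, where
`Θ` is an environment for λ-variables and `V` a finite set of quantum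
variables.  The parameter `ar` assigns to each unitary symbol its arity minus
one (so every unitary has arity at least 1). -/
inductive QTyped {UO : Type} (ar : UO → ℕ) : Ctx → Finset ℕ → QTm UO → Ty → Prop
  | var {Γ : Ctx} {i : ℕ} {A : Ty} :
      CtxUses Γ i A → QTyped ar Γ ∅ (.var i) A
  | qvar {Γ : Ctx} {r : ℕ} :
      CtxNull Γ → QTyped ar Γ {r} (.qvar r) .qbit
  | lam {Γ : Ctx} {V : Finset ℕ} {t : QTm UO} {A B : Ty} :
      QTyped ar (some A :: Γ) V t B → QTyped ar Γ V (.lam t) (.lolli A B)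
  | app {Γ Γ₁ Γ₂ : Ctx} {V₁ V₂ : Finset ℕ} {t u : QTm UO} {A B : Ty} :
      CtxSplit Γ Γ₁ Γ₂ → Disjoint V₁ V₂ →
      QTyped ar Γ₁ V₁ t (.lolli A B) → QTyped ar Γ₂ V₂ u A →
      QTyped ar Γ (V₁ ∪ V₂) (.app t u) B
  | pair {Γ Γ₁ Γ₂ : Ctx} {V₁ V₂ : Finset ℕ} {t u : QTm UO} {A B : Ty} :
      CtxSplit Γ Γ₁ Γ₂ → Disjoint V₁ V₂ →
      QTyped ar Γ₁ V₁ t A → QTyped ar Γ₂ V₂ u B →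
      QTyped ar Γ (V₁ ∪ V₂) (.pair t u) (.tensor A B)
  | lett {Γ Γ₁ Γ₂ : Ctx} {V₁ V₂ : Finset ℕ} {t u : QTm UO} {A B C : Ty} :
      CtxSplit Γ Γ₁ Γ₂ → Disjoint V₁ V₂ →
      QTyped ar Γ₁ V₁ t (.tensor A B) →
      QTyped ar (some A :: some B :: Γ₂) V₂ u C →
      QTyped ar Γ (V₁ ∪ V₂) (.lett t u) C
  | tt {Γ : Ctx} : CtxNull Γ → QTyped ar Γ ∅ .tt .bool
  | ff {Γ : Ctx} : CtxNull Γ → QTyped ar Γ ∅ .ff .bool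
  | ite {Γ : Ctx} {V : Finset ℕ} {t u v : QTm UO} {A : Ty} :
      QTyped ar Γ V t .bool → QTyped ar [] ∅ u A → QTyped ar [] ∅ v A →
      QTyped ar Γ V (.ite t u v) A
  | new {Γ : Ctx} : CtxNull Γ → QTyped ar Γ ∅ .new .qbit
  | meas {Γ : Ctx} : CtxNull Γ → QTyped ar Γ ∅ .meas (.lolli .qbit .bool)
  | unit {Γ : Ctx} {g : UO} :
      CtxNull Γ →
      QTyped ar Γ ∅ (.unit g) (.lolli (Ty.qpow (ar g)) (Ty.qpow (ar g)))

/-! ## Values and evaluation contexts -/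

/-- Values: `a, b ::= r | λx.t | ⟨a,b⟩ | new | tt | ff | meas | U`. -/
inductive IsValue {UO : Type} : QTm UO → Prop
  | qvar (r : ℕ) : IsValue (.qvar r)
  | lam (t : QTm UO) : IsValue (.lam t)
  | pair {a b : QTm UO} : IsValue a → IsValue b → IsValue (.pair a b)
  | new : IsValue .new
  | tt : IsValue .tt
  | ff : IsValue .ff
  | meas : IsValue .meas
  | unit (g : UO) : IsValue (.unit g)

/-- Evaluation contexts:
`E ::= [·] | E t | a F | ⟨E,t⟩ | ⟨a,F⟩ | let ⟨x,y⟩ = E in t | if E then t else u`. -/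
inductive ECtx (UO : Type) : Type
  | hole : ECtx UO
  | appL : ECtx UO → QTm UO → ECtx UO
  | appR : QTm UO → ECtx UO → ECtx UO
  | pairL : ECtx UO → QTm UO → ECtx UO
  | pairR : QTm UO → ECtx UO → ECtx UO
  | lett : ECtx UO → QTm UO → ECtx UO
  | ite : ECtx UO → QTm UO → QTm UO → ECtx UO

namespace ECtx

variable {UO : Type}

/-- Plugging a term in the hole of an evaluation context. -/
def plug : ECtx UO → QTm UO → QTm UO
  | .hole, s => s
  | .appL E t, s => .app (E.plug s) t
  | .appR a E, s => .app a (E.plug s)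
  | .pairL E t, s => .pair (E.plug s) t
  | .pairR a E, s => .pair a (E.plug s)
  | .lett E u, s => .lett (E.plug s) u
  | .ite E t u, s => .ite (E.plug s) t u

/-- Well-formedness of an evaluation context: the left components of `a F`
and `⟨a, F⟩` must be values. -/
def Ok : ECtx UO → Prop
  | .hole => True
  | .appL E _ => Ok E
  | .appR a E => IsValue a ∧ Ok E
  | .pairL E _ => Ok E
  | .pairR a E => IsValue a ∧ Ok E
  | .lett E _ => Ok E
  | .ite E _ _ => Ok E

end ECtx

/-! ## Quantum registers and closures -/

/-- The Hilbert space generated by the valuations of the quantum variables in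
`V`: amplitudes indexed by functions `V → {0,1}`. -/
def HS (V : Finset ℕ) : Type := ({x // x ∈ V} → Bool) → ℂ

/-- The squared norm of a vector of `HS V`. -/
noncomputable def nsq {V : Finset ℕ} (Q : HS V) : ℝ :=
  ∑ f : {x // x ∈ V} → Bool, ‖Q f‖ ^ 2

/-- A canonical fresh quantum variable. -/
def freshQ (V : Finset ℕ) : ℕ := (V.sup id) + 1

/-- `Q ⊗ |r ← 0⟩`. -/
noncomputable def extendQ {V : Finset ℕ} (r : ℕ) (Q : HS V) : HS (insert r V) :=
  fun f =>
    if f ⟨r, Finset.mem_insert_self r V⟩ = false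
    then Q fun v => f ⟨v.1, Finset.mem_insert_of_mem v.2⟩
    else 0

/-- Application of a `2^{n} × 2^{n}` matrix `M` to the qubits `r` of a
register `Q` (the qubits `r` are assumed pairwise distinct). -/
noncomputable def applyU {V : Finset ℕ} {ρ : Type} [Fintype ρ] [DecidableEq ρ]
    (M : Matrix (ρ → Bool) (ρ → Bool) ℂ) (r : ρ → {x // x ∈ V}) (Q : HS V) :
    HS V :=
  fun b => ∑ c : ρ → Bool,
    M (fun i => b (r i)) c *
      Q (fun v => if h : ∃ i, r i = v then c h.choose else b v)

/-- The probability of observing `b` when measuring the variable `v` in `Q`. -/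
noncomputable def probQ {V : Finset ℕ} (v : {x // x ∈ V}) (b : Bool) (Q : HS V) : ℝ :=
  ∑ f : {x // x ∈ V} → Bool, if f v = b then ‖Q f‖ ^ 2 else 0

/-- The renormalized projection of `Q` onto the subspace where `v` is
assigned `b`. -/
noncomputable def projRQ {V : Finset ℕ} (v : {x // x ∈ V}) (b : Bool) (Q : HS V) :
    HS V :=
  fun f => if f v = b then (((Real.sqrt (probQ v b Q))⁻¹ : ℝ) : ℂ) * Q f else 0

/-- A quantum closure `[Q, t]`. -/
structure QClos (UO : Type) : Type where
  V : Finset ℕ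
  Q : HS V
  t : QTm UO

/-- `[Q, t] : A` — the quantum closure is well-typed: `Q` is normalized and
`V ⊢ t : A`. -/
def QClos.Typed {UO : Type} (ar : UO → ℕ) (C : QClos UO) (A : Ty) : Prop :=
  nsq C.Q = 1 ∧ QTyped ar [] C.V C.t A

/-! ## Distributions and the operational semantics -/

open Classical in
/-- The Dirac (point) distribution. -/
noncomputable def dirac {X : Type*} (x : X) : X → ℝ := fun y => if y = x then 1 else 0

open Classical in
/-- The distribution `{x₁^{p₁}, x₂^{p₂}}`. -/
noncomputable def twoDist {X : Type*} (x₁ x₂ : X) (p₁ p₂ : ℝ) : X → ℝ :=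
  fun y => (if y = x₁ then p₁ else 0) + (if y = x₂ then p₂ else 0)

/-- The one-step reduction relation `↦` between quantum closures and finite
distributions of quantum closures. -/
inductive SStep {UO : Type} (ar : UO → ℕ)
    (interp : ∀ g : UO, Matrix (Fin (ar g + 1) → Bool) (Fin (ar g + 1) → Bool) ℂ) :
    QClos UO → (QClos UO → ℝ) → Prop
  | beta {V : Finset ℕ} {Q : HS V} {E : ECtx UO} {t u : QTm UO} :
      E.Ok →
      SStep ar interp ⟨V, Q, E.plug (.app (.lam t) u)⟩
        (dirac ⟨V, Q, E.plug (QTm.substAt 0 u t)⟩)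
  | lett {V : Finset ℕ} {Q : HS V} {E : ECtx UO} {t u v : QTm UO} :
      E.Ok →
      SStep ar interp ⟨V, Q, E.plug (.lett (.pair t u) v)⟩
        (dirac ⟨V, Q, E.plug (QTm.substAt 0 t (QTm.substAt 1 (u.lift 0) v))⟩)
  | iteTT {V : Finset ℕ} {Q : HS V} {E : ECtx UO} {t u : QTm UO} :
      E.Ok →
      SStep ar interp ⟨V, Q, E.plug (.ite .tt t u)⟩ (dirac ⟨V, Q, E.plug t⟩)
  | iteFF {V : Finset ℕ} {Q : HS V} {E : ECtx UO} {t u : QTm UO} :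
      E.Ok →
      SStep ar interp ⟨V, Q, E.plug (.ite .ff t u)⟩ (dirac ⟨V, Q, E.plug u⟩)
  | new {V : Finset ℕ} {Q : HS V} {E : ECtx UO} :
      E.Ok →
      SStep ar interp ⟨V, Q, E.plug .new⟩
        (dirac ⟨insert (freshQ V) V, extendQ (freshQ V) Q,
                E.plug (.qvar (freshQ V))⟩)
  | unitary {V : Finset ℕ} {Q : HS V} {E : ECtx UO} {g : UO}
      {r : Fin (ar g + 1) → {x // x ∈ V}} :
      E.Ok → Function.Injective r →
      SStep ar interp
        ⟨V, Q, E.plug (.app (.unit g) (qtuple (ar g) fun i => (r i).1))⟩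
        (dirac ⟨V, applyU (interp g) r Q,
                E.plug (qtuple (ar g) fun i => (r i).1)⟩)
  | meas {V : Finset ℕ} {Q : HS V} {E : ECtx UO} {r : ℕ} (hr : r ∈ V) :
      E.Ok →
      SStep ar interp ⟨V, Q, E.plug (.app .meas (.qvar r))⟩
        (twoDist ⟨V, projRQ ⟨r, hr⟩ false Q, E.plug .tt⟩
                 ⟨V, projRQ ⟨r, hr⟩ true Q, E.plug .ff⟩
                 (probQ ⟨r, hr⟩ false Q) (probQ ⟨r, hr⟩ true Q))

/-- The multistep relation `⇒` generated by a one-step relation between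
elements and finite distributions: either the Dirac distribution, or one step
to `{y₁^{q₁}, …, y_k^{q_k}}` followed by multisteps `yᵢ ⇒ 𝒮ᵢ`, giving
`Σᵢ qᵢ·𝒮ᵢ`. -/
inductive MStep {X : Type*} (rel : X → (X → ℝ) → Prop) : X → (X → ℝ) → Prop
  | refl (x : X) : MStep rel x (dirac x)
  | step {x : X} {𝒟 : X → ℝ} {k : ℕ} {y : Fin k → X} {q : Fin k → ℝ}
      {𝒮 : Fin k → X → ℝ} :
      rel x 𝒟 → Function.Injective y →
      (∀ i, 𝒟 (y i) = q i) → (∀ z, (∀ i, z ≠ y i) → 𝒟 z = 0) →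
      (∀ i, MStep rel (y i) (𝒮 i)) →
      MStep rel x (fun z => ∑ i, q i * 𝒮 i z)


/-!
Progress is proved by induction on the typing derivation, for terms typed in a context without
λ-variables. The statement is strengthened so that it survives evaluation contexts: a well-typed
term is either a value or reduces in every well-formed evaluation context and every register
containing its quantum variables. Since `new` is a value that nonetheless reduces, the canonical
forms of values of type `ℚ^{⊗n}` are either tuples of distinct quantum variables, which a unitary
consumes, or values with a `new` in evaluation position, which reduce.
-/

namespace ECtx

variable {UO : Type}

def comp : ECtx UO → ECtx UO → ECtx UO
  | .hole, F => F
  | .appL E t, F => .appL (E.comp F) t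
  | .appR a E, F => .appR a (E.comp F)
  | .pairL E t, F => .pairL (E.comp F) t
  | .pairR a E, F => .pairR a (E.comp F)
  | .lett E u, F => .lett (E.comp F) u
  | .ite E t u, F => .ite (E.comp F) t u

theorem plug_comp (E F : ECtx UO) (s : QTm UO) : (E.comp F).plug s = E.plug (F.plug s) := by
  induction E <;> simp only [comp, plug, *]

theorem Ok.comp {E F : ECtx UO} (hE : E.Ok) (hF : F.Ok) : (E.comp F).Ok := by
  induction E <;> simp_all only [ECtx.comp, Ok, and_self]

end ECtx

theorem CtxSplit.ctxNull {Γ Γ₁ Γ₂ : Ctx} (hs : CtxSplit Γ Γ₁ Γ₂) (hΓ : CtxNull Γ) :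
    CtxNull Γ₁ ∧ CtxNull Γ₂ := by
  refine ⟨fun j => ?_, fun j => ?_⟩ <;> rcases hs j with ⟨h₁, h₂⟩ | ⟨h₁, h₂⟩ <;>
    first | exact h₁ | exact h₂ ▸ hΓ j

namespace QTm

variable {UO : Type} (ar : UO → ℕ)
  (interp : ∀ g : UO, Matrix (Fin (ar g + 1) → Bool) (Fin (ar g + 1) → Bool) ℂ)

def CanStep (V : Finset ℕ) (t : QTm UO) : Prop :=
  ∀ W, V ⊆ W → ∀ (Q : HS W) (E : ECtx UO), E.Ok → ∃ 𝒟, SStep ar interp ⟨W, Q, E.plug t⟩ 𝒟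

variable {ar interp}

theorem CanStep.mono {V V' : Finset ℕ} {t : QTm UO} (hV : V ⊆ V') (h : CanStep ar interp V t) :
    CanStep ar interp V' t :=
  fun W hW => h W (hV.trans hW)

theorem CanStep.plug {V : Finset ℕ} {t : QTm UO} {F : ECtx UO} (h : CanStep ar interp V t)
    (hF : F.Ok) : CanStep ar interp V (F.plug t) := by
  intro W hW Q E hE
  rw [← ECtx.plug_comp]
  exact h W hW Q (E.comp F) (hE.comp hF)

theorem canStep_new (V : Finset ℕ) : CanStep ar interp V .new :=
  fun _ _ _ _ hE => ⟨_, .new hE⟩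

theorem canStep_meas {V : Finset ℕ} {r : ℕ} (hr : r ∈ V) :
    CanStep ar interp V (.app .meas (.qvar r)) :=
  fun _ hW _ _ hE => ⟨_, .meas (hW hr) hE⟩

theorem canStep_unitary {V : Finset ℕ} (g : UO) {r : Fin (ar g + 1) → ℕ}
    (hr : Function.Injective r) (hrV : ∀ i, r i ∈ V) :
    CanStep ar interp V (.app (.unit g) (qtuple (ar g) r)) :=
  fun _ hW _ _ hE =>
    ⟨_, .unitary (r := fun i => ⟨r i, hW (hrV i)⟩) hE fun _ _ h => hr (congrArg Subtype.val h)⟩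

end QTm

section Progress

open QTm

variable {UO : Type} {ar : UO → ℕ}
  {interp : ∀ g : UO, Matrix (Fin (ar g + 1) → Bool) (Fin (ar g + 1) → Bool) ℂ}

theorem IsValue.eq_new_or_qvar {Γ : Ctx} {V : Finset ℕ} {u : QTm UO}
    (h : QTyped ar Γ V u .qbit) (hu : IsValue u) : u = .new ∨ ∃ r, u = .qvar r ∧ V = {r} := by
  cases hu <;> cases h
  · exact Or.inr ⟨_, rfl, rfl⟩
  · exact Or.inl rfl

theorem IsValue.canStep_or_eq_qtuple {n : ℕ} {Γ : Ctx} {V : Finset ℕ} {u : QTm UO}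
    (h : QTyped ar Γ V u (Ty.qpow n)) (hu : IsValue u) :
    CanStep ar interp V u ∨
      ∃ r : Fin (n + 1) → ℕ, Function.Injective r ∧ (∀ i, r i ∈ V) ∧ u = qtuple n r := by
  induction n generalizing Γ V u with
  | zero =>
    rcases hu.eq_new_or_qvar h with rfl | ⟨r, rfl, rfl⟩
    · exact Or.inl (canStep_new V)
    · exact Or.inr ⟨fun _ => r, fun i j _ => by omega, fun _ => Finset.mem_singleton_self r, rfl⟩
  | succ n ih =>
    cases hu with
    | pair ha hb =>
      cases h with
      | pair _ hdisj hta htb =>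
        rcases ha.eq_new_or_qvar hta with rfl | ⟨r₀, rfl, rfl⟩
        · exact Or.inl (((canStep_new _).plug (F := .pairL .hole _) trivial).mono
            Finset.subset_union_left)
        rcases ih htb hb with hstep | ⟨r, hr, hrV, rfl⟩
        · exact Or.inl ((hstep.plug (F := .pairR (.qvar r₀) .hole) ⟨.qvar r₀, trivial⟩).mono
            Finset.subset_union_right)
        have hr₀ : r₀ ∉ Set.range r := by
          rintro ⟨i, hi⟩
          exact Finset.disjoint_left.mp hdisj (Finset.mem_singleton_self r₀) (hi ▸ hrV i)
        refine Or.inr ⟨Fin.cons r₀ r, Fin.cons_injective_iff.mpr ⟨hr₀, hr⟩, fun i => ?_, rfl⟩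
        cases i using Fin.cases
        · exact Finset.mem_union_left _ (Finset.mem_singleton_self r₀)
        · exact Finset.mem_union_right _ (hrV _)
    | _ => cases h

theorem canStep_app_of_isValue {Γ₁ Γ₂ : Ctx} {V₁ V₂ : Finset ℕ} {t u : QTm UO} {A B : Ty}
    (ht : QTyped ar Γ₁ V₁ t (.lolli A B)) (hu : QTyped ar Γ₂ V₂ u A)
    (hvt : IsValue t) (hvu : IsValue u) : CanStep ar interp V₂ (.app t u) := by
  cases hvt <;> cases ht
  case lam => exact fun _ _ _ _ hE => ⟨_, .beta hE⟩
  case meas =>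
    rcases hvu.canStep_or_eq_qtuple (n := 0) hu with hstep | ⟨r, -, hrV, rfl⟩
    · exact hstep.plug (F := .appR .meas .hole) ⟨.meas, trivial⟩
    · exact canStep_meas (hrV 0)
  case unit =>
    rcases hvu.canStep_or_eq_qtuple hu with hstep | ⟨r, hr, hrV, rfl⟩
    · exact hstep.plug (F := .appR (.unit _) .hole) ⟨.unit _, trivial⟩
    · exact canStep_unitary _ hr hrV

theorem QTyped.isValue_or_canStep {Γ : Ctx} {V : Finset ℕ} {t : QTm UO} {A : Ty}
    (h : QTyped ar Γ V t A) (hΓ : CtxNull Γ) : IsValue t ∨ CanStep ar interp V t := by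
  induction h with
  | var hu => exact absurd (hΓ _ ▸ hu.1) nofun
  | qvar | lam | tt | ff | new | meas | unit => exact Or.inl (by constructor)
  | @app _ _ _ _ _ t u _ _ hs _ ht hu iht ihu =>
    obtain ⟨hΓ₁, hΓ₂⟩ := hs.ctxNull hΓ
    refine Or.inr ?_
    rcases iht hΓ₁ with hvt | hstep
    · rcases ihu hΓ₂ with hvu | hstep
      · exact (canStep_app_of_isValue ht hu hvt hvu).mono Finset.subset_union_right
      · exact (hstep.plug (F := .appR t .hole) ⟨hvt, trivial⟩).mono Finset.subset_union_right
    · exact (hstep.plug (F := .appL .hole u) trivial).mono Finset.subset_union_left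
  | @pair _ _ _ _ _ t u _ _ hs _ _ _ iht ihu =>
    obtain ⟨hΓ₁, hΓ₂⟩ := hs.ctxNull hΓ
    rcases iht hΓ₁ with hvt | hstep
    · rcases ihu hΓ₂ with hvu | hstep
      · exact Or.inl (.pair hvt hvu)
      · exact Or.inr ((hstep.plug (F := .pairR t .hole) ⟨hvt, trivial⟩).mono
          Finset.subset_union_right)
    · exact Or.inr ((hstep.plug (F := .pairL .hole u) trivial).mono Finset.subset_union_left)
  | @lett _ _ _ _ _ _ u _ _ _ hs _ ht _ iht _ =>
    refine Or.inr ?_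
    rcases iht (hs.ctxNull hΓ).1 with hvt | hstep
    · cases hvt <;> cases ht
      exact fun _ _ _ _ hE => ⟨_, .lett hE⟩
    · exact (hstep.plug (F := .lett .hole u) trivial).mono Finset.subset_union_left
  | @ite _ _ _ u v _ ht _ _ iht _ _ =>
    refine Or.inr ?_
    rcases iht hΓ with hvt | hstep
    · cases hvt <;> cases ht
      · exact fun _ _ _ _ hE => ⟨_, .iteTT hE⟩
      · exact fun _ _ _ _ hE => ⟨_, .iteFF hE⟩
    · exact hstep.plug (F := .ite .hole u v) trivial

end Progress

theorem quantum_progress_general {UO : Type} (ar : UO → ℕ)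
    (interp : ∀ g : UO,
      Matrix (Fin (ar g + 1) → Bool) (Fin (ar g + 1) → Bool) ℂ)
    {C : QClos UO} {A : Ty} (hC : C.Typed ar A)
    (hnf : ∀ 𝒟 : QClos UO → ℝ, ¬ SStep ar interp C 𝒟) :
    IsValue C.t := by
  obtain ⟨V, Q, t⟩ := C
  refine (hC.2.isValue_or_canStep (interp := interp) fun _ => rfl).resolve_right fun hstep => ?_
  obtain ⟨𝒟, h𝒟⟩ := hstep V subset_rfl Q .hole trivial
  exact hnf 𝒟 h𝒟

/-- **Progress.**  If `[Q, t] : A` is a quantum closure in normal form (it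
relates to no distribution under `↦`), then `t` is a value. -/
theorem quantum_progress {UO : Type} [Fintype UO] (ar : UO → ℕ)
    (interp : ∀ g : UO,
      Matrix (Fin (ar g + 1) → Bool) (Fin (ar g + 1) → Bool) ℂ)
    {C : QClos UO} {A : Ty} (hC : C.Typed ar A)
    (hnf : ∀ 𝒟 : QClos UO → ℝ, ¬ SStep ar interp C 𝒟) :
    IsValue C.t :=
  quantum_progress_general ar interp hC hnf
end

section
/- If ↪ is a relation between elements of a set and finite probability distributions over that set, and ↝ is the multistep relation generated inductively by the rules 'x ↝ {x¹}' and 'if x ↪ {y₁^{q₁},…,y_m^{q_m}} and yᵢ ↝ 𝒮ᵢ for each i, then x ↝ Σᵢ qᵢ·𝒮ᵢ', then the following holds: if R ↝ {S₁^{p₁},…,S_n^{p_n}} and Sᵢ ↝ ℛᵢ for each i ∈ {1,…,n}, then R ↝ Σᵢ₌₁ⁿ pᵢ·ℛᵢ. -/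
/-! # Multistep reduction of finite probability distributions

The abstract "multiplication" lemma for multistep reduction relations over
finite probability distributions, from Dal Lago, Faggian, Hasuo, Yoshimizu,
"The Geometry of Synchronization". -/

/-- A finite (sub)probability distribution over `X`: nonnegative, finitely
supported, of total mass at most `1`. -/
def IsSubDist {X : Type*} (𝒟 : X → ℝ) : Prop :=
  (∀ x, 0 ≤ 𝒟 x) ∧ (Function.support 𝒟).Finite ∧ ∑ᶠ x, 𝒟 x ≤ 1

namespace MStep

variable {X : Type*} {rel : X → (X → ℝ) → Prop}

theorem nonneg (hrel : ∀ x 𝒟, rel x 𝒟 → IsSubDist 𝒟) {x : X} {𝒟 : X → ℝ}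
    (h : MStep rel x 𝒟) (z : X) : 0 ≤ 𝒟 z := by
  induction h generalizing z with
  | refl x => unfold dirac; split_ifs <;> norm_num
  | step hx _ hq _ _ ih =>
    exact Finset.sum_nonneg fun i _ => mul_nonneg (hq i ▸ (hrel _ _ hx).1 _) (ih i z)

open Classical in
theorem bind (hrel : ∀ x 𝒟, rel x 𝒟 → IsSubDist 𝒟) {x : X} {𝒟 : X → ℝ}
    (h : MStep rel x 𝒟) {s : Finset X} (hs : Function.support 𝒟 ⊆ s) {ℛ : X → X → ℝ}
    (hℛ : ∀ z ∈ s, MStep rel z (ℛ z)) :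
    MStep rel x (fun w => ∑ z ∈ s, 𝒟 z * ℛ z w) := by
  induction h with
  | refl x =>
    have hx : x ∈ s := hs (by simp [dirac])
    simpa [dirac, hx] using hℛ x hx
  | @step x 𝒟 k y q 𝒮 hx hy hq hzero h𝒮 ih =>
    have hq_nonneg (i : Fin k) : 0 ≤ q i := hq i ▸ (hrel _ _ hx).1 _
    -- By nonnegativity no cancellation occurs, so every `𝒮 i` of positive weight lives in `s`.
    have h𝒮s (i : Fin k) (hi : q i ≠ 0) : Function.support (𝒮 i) ⊆ s := by
      refine fun z hz => hs fun hsum => hz ?_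
      have := (Finset.sum_eq_zero_iff_of_nonneg fun j _ =>
        mul_nonneg (hq_nonneg j) ((h𝒮 j).nonneg hrel z)).1 hsum i (Finset.mem_univ i)
      exact (mul_eq_zero.1 this).resolve_left hi
    -- Branches of weight zero may reach outside `s`, so they are not reduced further.
    let T (i : Fin k) : X → ℝ :=
      if q i = 0 then dirac (y i) else fun w => ∑ z ∈ s, 𝒮 i z * ℛ z w
    have hT (i : Fin k) : MStep rel (y i) (T i) := by
      by_cases hi : q i = 0
      · simpa [T, hi] using MStep.refl (y i)
      · simpa [T, hi] using ih i (h𝒮s i hi)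
    have hqT (i : Fin k) (w : X) : q i * T i w = q i * ∑ z ∈ s, 𝒮 i z * ℛ z w := by
      by_cases hi : q i = 0 <;> simp [T, hi]
    convert MStep.step hx hy hq hzero hT using 2 with w
    simp only [hqT, Finset.mul_sum, Finset.sum_mul, mul_assoc]
    exact Finset.sum_comm

end MStep

open Classical in
/-- **Multistep composition.**  If `↪` relates elements to finite probability
distributions and `↝` is the generated multistep relation, then:
`R ↝ {S₁^{p₁}, …, S_n^{p_n}}` and `Sᵢ ↝ ℛᵢ` for each `i` imply
`R ↝ Σᵢ₌₁ⁿ pᵢ·ℛᵢ`. -/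
theorem multistep_composition {X : Type*} (rel : X → (X → ℝ) → Prop)
    (hrel : ∀ x 𝒟, rel x 𝒟 → IsSubDist 𝒟)
    {R : X} {n : ℕ} {Sf : Fin n → X} {p : Fin n → ℝ} {ℛ : Fin n → X → ℝ}
    (hinj : Function.Injective Sf)
    (h : MStep rel R (fun z => ∑ i, if z = Sf i then p i else 0))
    (hS : ∀ i, MStep rel (Sf i) (ℛ i)) :
    MStep rel R (fun z => ∑ i, p i * ℛ i z) := by
  have hsupp : Function.support (fun z => ∑ i, if z = Sf i then p i else 0) ⊆
      Finset.univ.image Sf := by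
    intro z hz
    obtain ⟨i, -, hi⟩ := Finset.exists_ne_zero_of_sum_ne_zero hz
    simp only [ite_ne_right_iff] at hi
    simp [hi.1]
  have hR : ∀ z ∈ Finset.univ.image Sf, MStep rel z (Function.extend Sf ℛ 0 z) := by
    simpa [hinj.extend_apply] using hS
  convert h.bind hrel hsupp hR using 2 with w
  simp [Finset.sum_image fun i _ j _ hij => hinj hij, hinj.extend_apply, hinj.eq_iff]
end
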